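/- arXiv:2403.09300 — 2 statements merged into one kernel-verified Lean document; each statement's English description precedes it below -/
import Mathlib

section
/- In a diamond-free DAG G, a vertex X is removable if and only if for all distinct Y, Z ∈ Mb(X;G), the set (Mb(X;G) ∪ {X}) ∖ {Y,Z} does not d-separate Y and Z in G. -/
/-!
Common framework: mixed graphs, paths, colliders, m-separation, MAGs,
removability, Markov boundaries, latent projection, orders.
-/

/-- A mixed graph over a vertex set `verts`, with directed edges `dir` and
bidirected edges `bi`. -/
structure MixedGraph (V : Type*) where
  verts : Set V
  dir : V → V → Prop
  bi : V → V → Prop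
  bi_symm : ∀ {a b : V}, bi a b → bi b a
  dir_mem : ∀ {a b : V}, dir a b → a ∈ verts ∧ b ∈ verts
  bi_mem : ∀ {a b : V}, bi a b → a ∈ verts ∧ b ∈ verts

namespace MixedGraph

variable {V : Type*}

/-- Two vertices are neighbors (adjacent) if joined by a directed or bidirected edge. -/
def adj (G : MixedGraph V) (a b : V) : Prop := G.dir a b ∨ G.dir b a ∨ G.bi a b

/-- `a` is an ancestor of `b` (every vertex is an ancestor of itself). -/
def anc (G : MixedGraph V) (a b : V) : Prop := Relation.ReflTransGen G.dir a b

/-- The set of neighbors of `a`. -/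
def neighbors (G : MixedGraph V) (a : V) : Set V := {b | b ≠ a ∧ G.adj a b}

/-- The set of parents of `a`. -/
def parents (G : MixedGraph V) (a : V) : Set V := {b | G.dir b a}

/-- The set of children of `a`. -/
def children (G : MixedGraph V) (a : V) : Set V := {b | G.dir a b}

/-- Co-parents of `a` (in a DAG): non-neighbors sharing a common child with `a`. -/
def coparents (G : MixedGraph V) (a : V) : Set V :=
  {b | b ≠ a ∧ ¬ G.adj a b ∧ ∃ c, G.dir a c ∧ G.dir b c}

/-- The district of `a`: vertices joined to `a` by a path of bidirected edges
(including `a` itself). -/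
def district (G : MixedGraph V) (a : V) : Set V := {b | Relation.ReflTransGen G.bi b a}

/-- `PaP(a) = Pa(a) ∪ Dis(a) ∪ Pa(Dis(a))`. -/
def paP (G : MixedGraph V) (a : V) : Set V :=
  G.parents a ∪ G.district a ∪ ⋃ b ∈ G.district a, G.parents b

/-- The induced subgraph of `G` over `W`. -/
def induce (G : MixedGraph V) (W : Set V) : MixedGraph V where
  verts := G.verts ∩ W
  dir a b := G.dir a b ∧ a ∈ W ∧ b ∈ W
  bi a b := G.bi a b ∧ a ∈ W ∧ b ∈ W
  bi_symm h := ⟨G.bi_symm h.1, h.2.2, h.2.1⟩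
  dir_mem h := ⟨⟨(G.dir_mem h.1).1, h.2.1⟩, (G.dir_mem h.1).2, h.2.2⟩
  bi_mem h := ⟨⟨(G.bi_mem h.1).1, h.2.1⟩, (G.bi_mem h.1).2, h.2.2⟩

end MixedGraph

/-- Possible orientations of an edge along a path: `fwd` is `a → b`,
`bwd` is `a ← b`, `bidir` is `a ↔ b`. -/
inductive EdgeDir
  | fwd | bwd | bidir

/-- Validity of an orientation mark between consecutive path vertices. -/
def edirValid {V : Type*} (G : MixedGraph V) (a b : V) : EdgeDir → Prop
  | .fwd => G.dir a b
  | .bwd => G.dir b a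
  | .bidir => G.bi a b

/-- The edge has an arrowhead at its second (right) endpoint. -/
def headAt2 (e : EdgeDir) : Prop := e = .fwd ∨ e = .bidir

/-- The edge has an arrowhead at its first (left) endpoint. -/
def headAt1 (e : EdgeDir) : Prop := e = .bwd ∨ e = .bidir

/-- A path in a mixed graph `G` from `x` to `y`: a sequence of distinct vertices
`vert 0, …, vert len` together with an oriented edge of `G` between consecutive
vertices. -/
structure MPath {V : Type*} (G : MixedGraph V) (x y : V) where
  len : ℕ
  len_pos : 0 < len
  vert : ℕ → V
  edir : ℕ → EdgeDir
  first : vert 0 = x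
  last : vert len = y
  mem : ∀ i, i ≤ len → vert i ∈ G.verts
  inj : ∀ i j, i ≤ len → j ≤ len → vert i = vert j → i = j
  valid : ∀ i, i < len → edirValid G (vert i) (vert (i + 1)) (edir i)

namespace MPath

variable {V : Type*} {G : MixedGraph V} {x y : V}

/-- The vertex at interior position `i` (where `0 < i < len`) is a collider on the path:
both incident path edges have an arrowhead at it. -/
def collider (p : MPath G x y) (i : ℕ) : Prop :=
  headAt2 (p.edir (i - 1)) ∧ headAt1 (p.edir i)

/-- The path is blocked by `Z`: some interior vertex is a collider that is not an
ancestor of any vertex of `Z ∪ {x, y}`, or a non-collider belonging to `Z`. -/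
def blocked (p : MPath G x y) (Z : Set V) : Prop :=
  ∃ i, 0 < i ∧ i < p.len ∧
    ((p.collider i ∧ ∀ w ∈ Z ∪ ({x, y} : Set V), ¬ G.anc (p.vert i) w) ∨
     (¬ p.collider i ∧ p.vert i ∈ Z))

/-- A collider path: every interior vertex is a collider on the path. -/
def isColliderPath (p : MPath G x y) : Prop :=
  ∀ i, 0 < i → i < p.len → p.collider i

/-- An inducing path relative to `W2`: every interior non-collider belongs to `W2`,
and every interior collider is an ancestor of `x` or of `y`. -/
def isInducing (p : MPath G x y) (W2 : Set V) : Prop :=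
  ∀ i, 0 < i → i < p.len →
    (p.collider i → G.anc (p.vert i) x ∨ G.anc (p.vert i) y) ∧
    (¬ p.collider i → p.vert i ∈ W2)

end MPath

/-- `Z` m-separates `x` and `y` in `G`: every path between `x` and `y` is blocked by `Z`. -/
def mSep {V : Type*} (G : MixedGraph V) (x y : V) (Z : Set V) : Prop :=
  ∀ p : MPath G x y, p.blocked Z

namespace MixedGraph

variable {V : Type*}

/-- The Markov boundary of `a` in `G`: vertices `b ≠ a` with a collider path to `a`. -/
def mb (G : MixedGraph V) (a : V) : Set V :=
  {b | b ≠ a ∧ ∃ p : MPath G b a, p.isColliderPath}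

/-- `G` is a maximal ancestral graph (MAG): no directed cycles, no almost directed
cycles, and every pair of distinct non-neighbor vertices is m-separated by some set. -/
structure IsMAG (G : MixedGraph V) : Prop where
  no_dir_cycle : ∀ a b, G.dir a b → ¬ G.anc b a
  no_almost_dir_cycle : ∀ a b, G.bi a b → ¬ G.anc b a
  maximal : ∀ a ∈ G.verts, ∀ b ∈ G.verts, a ≠ b → ¬ G.adj a b →
    ∃ Z ⊆ G.verts \ {a, b}, mSep G a b Z

/-- `G` is a DAG: a MAG with no bidirected edges. -/
def IsDAG (G : MixedGraph V) : Prop := G.IsMAG ∧ ∀ a b, ¬ G.bi a b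

/-- `x` is removable in `G`: `G` and the induced subgraph `G[verts ∖ {x}]` impose the
same m-separation relations among the vertices of `verts ∖ {x}`. -/
def Removable (G : MixedGraph V) (x : V) : Prop :=
  ∀ y z, y ∈ G.verts → z ∈ G.verts → y ≠ x → z ≠ x → y ≠ z →
    ∀ Z ⊆ G.verts \ {x, y, z},
      (mSep G y z Z ↔ mSep (G.induce (G.verts \ {x})) y z Z)

/-- There is an inducing path between `a` and `b` in `G` relative to `W2`. -/
def InducingAdj (G : MixedGraph V) (W2 : Set V) (a b : V) : Prop :=
  (∃ p : MPath G a b, p.isInducing W2) ∨ (∃ p : MPath G b a, p.isInducing W2)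

/-- The latent projection of `G` onto `W1`: distinct `a, b ∈ W1` are joined iff there is
an inducing path between them in `G` relative to `G.verts ∖ W1`; the edge is `a → b` if
`a` is an ancestor of `b` in `G` but not conversely, and `a ↔ b` if neither is an
ancestor of the other. -/
def project (G : MixedGraph V) (W1 : Set V) : MixedGraph V where
  verts := W1
  dir a b := a ∈ W1 ∧ b ∈ W1 ∧ a ≠ b ∧ InducingAdj G (G.verts \ W1) a b ∧
    G.anc a b ∧ ¬ G.anc b a
  bi a b := a ∈ W1 ∧ b ∈ W1 ∧ a ≠ b ∧ InducingAdj G (G.verts \ W1) a b ∧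
    ¬ G.anc a b ∧ ¬ G.anc b a
  bi_symm h :=
    ⟨h.2.1, h.1, h.2.2.1.symm, Or.symm h.2.2.2.1, h.2.2.2.2.2, h.2.2.2.2.1⟩
  dir_mem h := ⟨h.1, h.2.1⟩
  bi_mem h := ⟨h.1, h.2.1⟩

/-- Two mixed graphs over the same vertex set impose exactly the same m-separation
relations. -/
def MarkovEquiv (G1 G2 : MixedGraph V) : Prop :=
  ∀ a ∈ G1.verts, ∀ b ∈ G1.verts, a ≠ b → ∀ Z ⊆ G1.verts \ {a, b},
    (mSep G1 a b Z ↔ mSep G2 a b Z)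

/-- A list of vertices is an order over (the vertex set of) `G` if it lists each vertex
exactly once. -/
def IsOrder (G : MixedGraph V) (l : List V) : Prop :=
  l.Nodup ∧ ∀ v, v ∈ l ↔ v ∈ G.verts

/-- An r-order of `G`: an order `(X₁, …, Xₙ)` such that each `Xᵢ` is removable in the
induced subgraph `G[{Xᵢ, …, Xₙ}]`. -/
def IsROrder (G : MixedGraph V) (l : List V) : Prop :=
  IsOrder G l ∧ ∀ (i : ℕ) (h : i < l.length),
    Removable (G.induce {v | v ∈ l.drop i}) (l.get ⟨i, h⟩)

/-- A c-order of a DAG `G`: an order `(X₁, …, Xₙ)` such that each `Xᵢ` has no children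
in the induced subgraph `G[{Xᵢ, …, Xₙ}]`. -/
def IsCOrder (G : MixedGraph V) (l : List V) : Prop :=
  IsOrder G l ∧ ∀ (i : ℕ) (h : i < l.length),
    ∀ v, ¬ (G.induce {v' | v' ∈ l.drop i}).dir (l.get ⟨i, h⟩) v

/-- The maximum in-degree of `G`. -/
noncomputable def deltaIn (G : MixedGraph V) : ℕ :=
  sSup {n | ∃ a ∈ G.verts, n = (G.parents a).ncard}

/-- `Δin⁺(G)`: the maximum of `|PaP(a)|` over the vertices of `G`. -/
noncomputable def deltaInPlus (G : MixedGraph V) : ℕ :=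
  sSup {n | ∃ a ∈ G.verts, n = (G.paP a).ncard}

/-- `G` is diamond-free: it contains no induced subgraph on four vertices `a, b, c, d`
whose skeleton has exactly the edges a–b, a–c, a–d, b–d, c–d (with b, c non-adjacent). -/
def DiamondFree (G : MixedGraph V) : Prop :=
  ¬ ∃ a b c d : V, a ∈ G.verts ∧ b ∈ G.verts ∧ c ∈ G.verts ∧ d ∈ G.verts ∧
    a ≠ b ∧ a ≠ c ∧ a ≠ d ∧ b ≠ c ∧ b ≠ d ∧ c ≠ d ∧
    G.adj a b ∧ G.adj a c ∧ G.adj a d ∧ G.adj b d ∧ G.adj c d ∧ ¬ G.adj b c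

end MixedGraph

/-- The cost of an order `(X₁, …, Xₙ)`: `Σₜ |Ne(Xₜ; G_{Vₜ})|` where `Vₜ = {Xₜ, …, Xₙ}`
and `G_{Vₜ}` is the latent projection of `G` onto `Vₜ` (the term for `t = n` is zero). -/
noncomputable def orderCost {V : Type*} (G : MixedGraph V) : List V → ℕ
  | [] => 0
  | x :: rest => ((G.project {v | v ∈ x :: rest}).neighbors x).ncard + orderCost G rest



open MixedGraph

namespace S16

variable {V : Type*}

/-- Acyclicity of the directed part. -/
def Acyc (G : MixedGraph V) : Prop := ∀ a b, G.dir a b → ¬ G.anc b a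

/-- No bidirected edges. -/
def NoBi (G : MixedGraph V) : Prop := ∀ a b, ¬ G.bi a b

lemma IsDAG.acyc {G : MixedGraph V} (h : G.IsDAG) : Acyc G := h.1.no_dir_cycle
lemma IsDAG.noBi {G : MixedGraph V} (h : G.IsDAG) : NoBi G := h.2

lemma anc_refl (G : MixedGraph V) (a : V) : G.anc a a := Relation.ReflTransGen.refl

lemma anc_single {G : MixedGraph V} {a b : V} (h : G.dir a b) : G.anc a b :=
  Relation.ReflTransGen.single h

lemma anc_trans {G : MixedGraph V} {a b c : V} (h1 : G.anc a b) (h2 : G.anc b c) :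
    G.anc a c := Relation.ReflTransGen.trans h1 h2

lemma dir_ne {G : MixedGraph V} (hA : Acyc G) {a b : V} (h : G.dir a b) : a ≠ b := by
  rintro rfl; exact hA a a h (anc_refl G a)

lemma anc_antisymm {G : MixedGraph V} (hA : Acyc G) {a b : V}
    (h1 : G.anc a b) (h2 : G.anc b a) : a = b := by
  rcases (Relation.ReflTransGen.cases_head h1) with rfl | ⟨u, hau, hub⟩
  · rfl
  · exact absurd (anc_trans hub h2) (hA a u hau)

/-- Set of ancestors of a set. -/
def ancSet (G : MixedGraph V) (W : Set V) : Set V := {v | ∃ w ∈ W, G.anc v w}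

lemma mem_ancSet_self {G : MixedGraph V} {W : Set V} {v : V} (h : v ∈ W) :
    v ∈ ancSet G W := ⟨v, h, anc_refl G v⟩

lemma mem_ancSet_of_anc {G : MixedGraph V} {W : Set V} {v u : V} (h : G.anc v u)
    (hu : u ∈ ancSet G W) : v ∈ ancSet G W := by
  obtain ⟨w, hw, hanc⟩ := hu; exact ⟨w, hw, anc_trans h hanc⟩

/-- Moral edge with bridges from a set `A`. -/
def medge (G : MixedGraph V) (A : Set V) (a b : V) : Prop :=
  G.dir a b ∨ G.dir b a ∨ ∃ d ∈ A, G.dir a d ∧ G.dir b d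

/-- Moral walk between `y` and `z` in the moral graph of the ancestral closure of
`Z ∪ {y, z}`, with interior vertices outside `Z`. -/
def MorWalk (G : MixedGraph V) (y z : V) (Z : Set V) : Prop :=
  ∃ mid : List V,
    List.Chain' (medge G (ancSet G (Z ∪ {y, z}))) (y :: mid ++ [z]) ∧
    ∀ v ∈ mid, v ∈ ancSet G (Z ∪ {y, z}) ∧ v ∉ Z ∧ v ≠ y ∧ v ≠ z

section Induce

variable {G : MixedGraph V} {W : Set V}

lemma induce_dir {a b : V} (h : (G.induce W).dir a b) : G.dir a b := h.1

lemma induce_anc {a b : V} (h : (G.induce W).anc a b) : G.anc a b :=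
  Relation.ReflTransGen.mono (fun _ _ h => h.1) _ _ h

lemma induce_acyc (hA : Acyc G) : Acyc (G.induce W) :=
  fun a b h hanc => hA a b (induce_dir h) (induce_anc hanc)

lemma induce_noBi (hB : NoBi G) : NoBi (G.induce W) :=
  fun a b h => hB a b h.1

/-- Lift a path in an induced subgraph to the ambient graph. -/
def MPath.lift {y z : V} (p : MPath (G.induce W) y z) : MPath G y z where
  len := p.len
  len_pos := p.len_pos
  vert := p.vert
  edir := p.edir
  first := p.first
  last := p.last
  mem := fun i hi => ((p.mem i hi).1 : _ ∈ G.verts)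
  inj := p.inj
  valid := by
    intro i hi
    have h := p.valid i hi
    cases he : p.edir i <;> rw [he] at h <;> simp only [edirValid] <;> exact h.1

lemma mSep_induce_of_mSep {y z : V} {Z : Set V} (h : mSep G y z Z) :
    mSep (G.induce W) y z Z := by
  intro p
  have hb := h (MPath.lift p)
  obtain ⟨i, hi0, hilen, hcase⟩ := hb
  refine ⟨i, hi0, hilen, ?_⟩
  rcases hcase with ⟨hcol, hanc⟩ | ⟨hncol, hmem⟩
  · exact Or.inl ⟨hcol, fun w hw hanc' => hanc w hw (induce_anc hanc')⟩
  · exact Or.inr ⟨hncol, hmem⟩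

end Induce

end S16


open MixedGraph

namespace S16

variable {V : Type*}

/-- A pre-path: like `MPath` but without injectivity. -/
structure PrePath (G : MixedGraph V) (y z : V) where
  len : ℕ
  len_pos : 0 < len
  vert : ℕ → V
  edir : ℕ → EdgeDir
  first : vert 0 = y
  last : vert len = z
  mem : ∀ i, i ≤ len → vert i ∈ G.verts
  valid : ∀ i, i < len → edirValid G (vert i) (vert (i + 1)) (edir i)

namespace PrePath

variable {G : MixedGraph V} {y z : V}

def collider (p : PrePath G y z) (i : ℕ) : Prop :=
  headAt2 (p.edir (i - 1)) ∧ headAt1 (p.edir i)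

/-- Invariant guaranteeing an unblocked path after deduplication. -/
def ok (p : PrePath G y z) (A Z : Set V) : Prop :=
  ∀ i, 0 < i → i < p.len →
    p.vert i ∈ A ∧ (¬ p.collider i → p.vert i ∉ Z)

/-- Single-edge pre-path. -/
def single (e : EdgeDir) (h : edirValid G y z e) (hy : y ∈ G.verts) (hz : z ∈ G.verts) :
    PrePath G y z where
  len := 1
  len_pos := one_pos
  vert := fun k => if k = 0 then y else z
  edir := fun _ => e
  first := by simp
  last := by simp
  mem := by intro i _; by_cases h0 : i = 0 <;> simp [h0, hy, hz]
  valid := by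
    intro i hi
    have : i = 0 := by omega
    subst this; simpa using h

lemma single_ok (e : EdgeDir) (h : edirValid G y z e) (hy : y ∈ G.verts) (hz : z ∈ G.verts)
    (A Z : Set V) : (single e h hy hz).ok A Z := by
  intro i hi0 hi1
  exact absurd (by simpa [single] using hi1) (by omega)

/-- Two-edge collider pre-path `y → d ← z`. -/
def bridge (d : V) (h1 : G.dir y d) (h2 : G.dir z d) : PrePath G y z where
  len := 2
  len_pos := by omega
  vert := fun k => if k = 0 then y else if k = 1 then d else z
  edir := fun k => if k = 0 then .fwd else .bwd
  first := by simp
  last := by simp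
  mem := by
    intro i _
    rcases Nat.lt_or_ge i 1 with h | h
    · have : i = 0 := by omega
      simp [this, (G.dir_mem h1).1]
    rcases Nat.lt_or_ge i 2 with h' | h'
    · have : i = 1 := by omega
      simp [this, (G.dir_mem h1).2]
    · have h2' : ¬ (i = 0) := by omega
      have h3' : ¬ (i = 1) := by omega
      simp [h2', h3', (G.dir_mem h2).1]
  valid := by
    intro i hi
    rcases Nat.lt_or_ge i 1 with h | h
    · have : i = 0 := by omega
      subst this; simpa [edirValid] using h1
    · have : i = 1 := by omega
      subst this; simpa [edirValid] using h2

lemma bridge_ok (d : V) (h1 : G.dir y d) (h2 : G.dir z d) {A Z : Set V}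
    (hd : d ∈ A) : (bridge d h1 h2).ok A Z := by
  intro i hi0 hi1
  have : i = 1 := by
    have : i < 2 := hi1
    omega
  subst this
  constructor
  · simpa [bridge] using hd
  · intro hc
    exact absurd ⟨by simp [bridge, headAt2], by simp [bridge, headAt1]⟩ hc

/-- Prepend an edge `y — b` to a pre-path from `b`. -/
def consEdge (p : PrePath G b z) (e : EdgeDir) (h : edirValid G y b e)
    (hy : y ∈ G.verts) : PrePath G y z where
  len := p.len + 1
  len_pos := by omega
  vert := fun k => match k with | 0 => y | (k + 1) => p.vert k
  edir := fun k => match k with | 0 => e | (k + 1) => p.edir k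
  first := rfl
  last := p.last
  mem := by
    rintro (_ | i) hi
    · exact hy
    · exact p.mem i (by omega)
  valid := by
    rintro (_ | i) hi
    · simpa [p.first] using h
    · exact p.valid i (by omega)

lemma consEdge_ok {p : PrePath G b z} {A Z : Set V} (hok : p.ok A Z) (e : EdgeDir)
    (h : edirValid G y b e) (hy : y ∈ G.verts)
    (hbA : b ∈ A) (hbZ : b ∉ Z) :
    (consEdge p e h hy).ok A Z := by
  rintro (_ | i) hi0 hi1
  · omega
  · rcases Nat.eq_zero_or_pos i with rfl | hipos
    · refine ⟨by simpa [consEdge, p.first] using hbA, fun _ => by simpa [consEdge, p.first] using hbZ⟩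
    · have hi : i < p.len := by
        have : i + 1 < p.len + 1 := hi1
        omega
      have hp := hok i hipos hi
      refine ⟨by simpa [consEdge] using hp.1, ?_⟩
      intro hc
      have : ¬ p.collider i := by
        intro hcc
        apply hc
        obtain ⟨i0, hi0'⟩ : ∃ j, i = j + 1 := ⟨i - 1, by omega⟩
        subst hi0'
        exact ⟨hcc.1, hcc.2⟩
      simpa [consEdge] using hp.2 this

/-- Prepend a collider bridge `y → d ← b` to a pre-path from `b`. -/
def consBridge (p : PrePath G b z) (d : V) (h1 : G.dir y d) (h2 : G.dir b d) :
    PrePath G y z where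
  len := p.len + 2
  len_pos := by omega
  vert := fun k => match k with | 0 => y | 1 => d | (k + 2) => p.vert k
  edir := fun k => match k with | 0 => .fwd | 1 => .bwd | (k + 2) => p.edir k
  first := rfl
  last := p.last
  mem := by
    rintro (_ | _ | i) hi
    · exact (G.dir_mem h1).1
    · exact (G.dir_mem h1).2
    · exact p.mem i (by omega)
  valid := by
    rintro (_ | _ | i) hi
    · simpa [edirValid] using h1
    · simpa [edirValid, p.first] using h2
    · exact p.valid i (by omega)

lemma consBridge_ok {p : PrePath G b z} {A Z : Set V} (hok : p.ok A Z) (d : V)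
    (h1 : G.dir y d) (h2 : G.dir b d)
    (hdA : d ∈ A)
    (hbA : b ∈ A) (hbZ : b ∉ Z) :
    (consBridge p d h1 h2).ok A Z := by
  rintro (_ | _ | i) hi0 hi1
  · omega
  · refine ⟨by simpa [consBridge] using hdA, ?_⟩
    intro hc
    exact absurd ⟨by simp [consBridge, headAt2], by simp [consBridge, headAt1]⟩ hc
  · rcases Nat.eq_zero_or_pos i with rfl | hipos
    · refine ⟨by simpa [consBridge, p.first] using hbA, fun _ => by simpa [consBridge, p.first] using hbZ⟩
    · have hi : i < p.len := by
        have : i + 2 < p.len + 2 := hi1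
        omega
      have hp := hok i hipos hi
      refine ⟨by simpa [consBridge] using hp.1, ?_⟩
      intro hc
      have : ¬ p.collider i := by
        intro hcc
        apply hc
        obtain ⟨i0, hi0'⟩ : ∃ j, i = j + 1 := ⟨i - 1, by omega⟩
        subst hi0'
        exact ⟨hcc.1, hcc.2⟩
      simpa [consBridge] using hp.2 this

end PrePath

end S16


open MixedGraph

namespace S16

namespace PrePath

variable {V : Type*} {G : MixedGraph V} {y z : V}

/-- Shortcut a pre-path at a repeated vertex. -/
def shortcut (p : PrePath G y z) (i j : ℕ) (hij : i < j) (hj : j ≤ p.len)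
    (hv : p.vert i = p.vert j) (hpos : 0 < p.len - (j - i)) : PrePath G y z where
  len := p.len - (j - i)
  len_pos := hpos
  vert := fun k => if k ≤ i then p.vert k else p.vert (k + (j - i))
  edir := fun k => if k < i then p.edir k else p.edir (k + (j - i))
  first := by simp [p.first]
  last := by
    by_cases h : p.len - (j - i) ≤ i
    · have hji : j = p.len := by omega
      have hli : p.len - (j - i) = i := by omega
      rw [if_pos h, hli, hv, hji, p.last]
    · rw [if_neg h]
      have : p.len - (j - i) + (j - i) = p.len := by omega
      rw [this, p.last]
  mem := by
    intro k hk
    by_cases h : k ≤ i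
    · rw [if_pos h]; exact p.mem k (by omega)
    · rw [if_neg h]; exact p.mem _ (by omega)
  valid := by
    intro k hk
    by_cases h : k < i
    · have h1 : k ≤ i := by omega
      have h2 : k + 1 ≤ i := by omega
      rw [if_pos h, if_pos h1, if_pos h2]
      exact p.valid k (by omega)
    · have h2 : ¬ (k + 1 ≤ i) := by omega
      rw [if_neg h, if_neg h2]
      by_cases hki : k = i
      · have e0 : k ≤ i := by omega
        have hvk : p.vert k = p.vert j := by rw [hki]; exact hv
        rw [if_pos e0, hvk]
        have hvv : k + (j - i) = j := by omega
        have hvv2 : k + 1 + (j - i) = j + 1 := by omega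
        rw [hvv, hvv2]
        exact p.valid j (by omega)
      · rw [if_neg (by omega : ¬ (k ≤ i))]
        have : k + (j - i) + 1 = k + 1 + (j - i) := by omega
        rw [← this]
        exact p.valid _ (by omega)

lemma shortcut_ok {A Z : Set V} (p : PrePath G y z) (i j : ℕ) (hij : i < j) (hj : j ≤ p.len)
    (hv : p.vert i = p.vert j) (hpos : 0 < p.len - (j - i)) (hok : p.ok A Z) :
    (shortcut p i j hij hj hv hpos).ok A Z := by
  intro k hk0 hklen
  have hklen' : k < p.len - (j - i) := hklen
  by_cases hki : k < i
  · have e1 : (shortcut p i j hij hj hv hpos).vert k = p.vert k := if_pos (by omega)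
    have e2 : (shortcut p i j hij hj hv hpos).edir k = p.edir k := if_pos hki
    have e3 : (shortcut p i j hij hj hv hpos).edir (k - 1) = p.edir (k - 1) :=
      if_pos (by omega)
    have hp := hok k hk0 (by omega)
    rw [e1]
    refine ⟨hp.1, fun hc => hp.2 fun hcc => hc ?_⟩
    exact ⟨by rw [e3]; exact hcc.1, by rw [e2]; exact hcc.2⟩
  · by_cases hke : k = i
    · have e1 : (shortcut p i j hij hj hv hpos).vert k = p.vert k := if_pos (by omega)
      have e2 : (shortcut p i j hij hj hv hpos).edir k = p.edir (k + (j - i)) :=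
        if_neg (by omega)
      have e3 : (shortcut p i j hij hj hv hpos).edir (k - 1) = p.edir (k - 1) :=
        if_pos (by omega)
      have hkj : k + (j - i) = j := by omega
      have hp := hok k hk0 (by omega)
      rw [e1]
      refine ⟨hp.1, fun hc => ?_⟩
      by_cases hh : headAt2 (p.edir (k - 1))
      · -- then ¬ headAt1 (p.edir j), so j is a non-collider of p
        have hj2 : ¬ headAt1 (p.edir j) := by
          intro hh1
          exact hc ⟨by rw [e3]; exact hh, by rw [e2, hkj]; exact hh1⟩
        have hjlen : j < p.len := by omega
        have hpj := hok j (by omega) hjlen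
        have h5 := hpj.2 (fun hcc => hj2 hcc.2)
        rw [← hv, ← hke] at h5
        exact h5
      · exact hp.2 (fun hcc => hh hcc.1)
    · -- k > i
      have hki' : i < k := by omega
      have e1 : (shortcut p i j hij hj hv hpos).vert k = p.vert (k + (j - i)) :=
        if_neg (by omega)
      have e2 : (shortcut p i j hij hj hv hpos).edir k = p.edir (k + (j - i)) :=
        if_neg (by omega)
      have e3 : (shortcut p i j hij hj hv hpos).edir (k - 1) = p.edir (k - 1 + (j - i)) :=
        if_neg (by omega)
      have hp := hok (k + (j - i)) (by omega) (by omega)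
      rw [e1]
      refine ⟨hp.1, fun hc => hp.2 fun hcc => hc ?_⟩
      have harith : k + (j - i) - 1 = k - 1 + (j - i) := by omega
      exact ⟨by rw [e3, ← harith]; exact hcc.1, by rw [e2]; exact hcc.2⟩

/-- From a pre-path satisfying the invariant, extract an unblocked genuine path. -/
lemma exists_unblocked {A Z : Set V} (hyz : y ≠ z)
    (hA : A ⊆ ancSet G (Z ∪ {y, z})) :
    ∀ n (p : PrePath G y z), p.len = n → p.ok A Z → ∃ q : MPath G y z, ¬ q.blocked Z := by
  intro n
  induction n using Nat.strong_induction_on with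
  | _ n ih =>
    intro p hn hok
    by_cases hinj : ∀ i j, i ≤ p.len → j ≤ p.len → p.vert i = p.vert j → i = j
    · refine ⟨⟨p.len, p.len_pos, p.vert, p.edir, p.first, p.last, p.mem, hinj, p.valid⟩, ?_⟩
      rintro ⟨i, hi0, hilen, hc⟩
      have hp := hok i hi0 hilen
      rcases hc with ⟨hcol, hall⟩ | ⟨hncol, hmem⟩
      · obtain ⟨w, hw, hanc⟩ := hA hp.1
        exact hall w hw hanc
      · exact hp.2 (fun hcc => hncol ⟨hcc.1, hcc.2⟩) hmem
    · push_neg at hinj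
      obtain ⟨i, j, hi, hj, heq, hne⟩ := hinj
      -- order them
      have key : ∀ i j, i < j → j ≤ p.len → p.vert i = p.vert j →
          ∃ q : MPath G y z, ¬ q.blocked Z := by
        intro i j hij hj hv
        have hpos : 0 < p.len - (j - i) := by
          rcases Nat.eq_zero_or_pos i with rfl | hipos
          · by_cases hjl : j = p.len
            · exact absurd (by rw [← p.first, hv, hjl]; exact p.last) hyz
            · omega
          · omega
        exact ih (p.len - (j - i)) (by omega) (shortcut p i j hij hj hv hpos) rfl
          (shortcut_ok p i j hij hj hv hpos hok)
      rcases Nat.lt_or_ge i j with h | h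
      · exact key i j h hj heq
      · have : j < i := by omega
        exact key j i this hi heq.symm

end PrePath

/-- A moral walk yields failure of m-separation. -/
lemma MorWalk.not_mSep {G : MixedGraph V} {y z : V} {Z : Set V} (hyz : y ≠ z)
    (h : MorWalk G y z Z) : ¬ mSep G y z Z := by
  classical
  set A := ancSet G (Z ∪ {y, z}) with hA
  obtain ⟨mid, hchain, hconds⟩ := h
  -- build a PrePath by induction on mid, generalizing the start vertex
  have build : ∀ (mid : List V) (a : V), List.Chain' (medge G A) (a :: mid ++ [z]) →
      (∀ v ∈ mid, v ∈ A ∧ v ∉ Z) →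
      ∃ p : PrePath G a z, p.ok A Z := by
    intro mid
    induction mid with
    | nil =>
      intro a hch _
      have hm : medge G A a z := List.isChain_pair.mp hch
      rcases hm with h1 | h1 | ⟨d, hd, h1, h2⟩
      · exact ⟨PrePath.single .fwd h1 (G.dir_mem h1).1 (G.dir_mem h1).2,
          PrePath.single_ok _ _ _ _ _ _⟩
      · exact ⟨PrePath.single .bwd h1 (G.dir_mem h1).2 (G.dir_mem h1).1,
          PrePath.single_ok _ _ _ _ _ _⟩
      · exact ⟨PrePath.bridge d h1 h2, PrePath.bridge_ok d h1 h2 hd⟩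
    | cons v rest ihm =>
      intro a hch hcond
      have hch' : medge G A a v ∧ List.Chain' (medge G A) (v :: rest ++ [z]) :=
        List.isChain_cons_cons.mp hch
      obtain ⟨p, hpok⟩ := ihm v hch'.2 (fun u hu => hcond u (List.mem_cons_of_mem _ hu))
      have hv := hcond v (List.mem_cons_self)
      rcases hch'.1 with h1 | h1 | ⟨d, hd, h1, h2⟩
      · exact ⟨PrePath.consEdge p .fwd (by simpa [edirValid] using h1) (G.dir_mem h1).1,
          PrePath.consEdge_ok hpok _ _ _ hv.1 hv.2⟩
      · exact ⟨PrePath.consEdge p .bwd (by simpa [edirValid] using h1) (G.dir_mem h1).2,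
          PrePath.consEdge_ok hpok _ _ _ hv.1 hv.2⟩
      · exact ⟨PrePath.consBridge p d h1 h2,
          PrePath.consBridge_ok hpok d h1 h2 hd hv.1 hv.2⟩
  obtain ⟨p, hpok⟩ := build mid y hchain (fun v hv => ⟨(hconds v hv).1, (hconds v hv).2.1⟩)
  obtain ⟨q, hq⟩ := PrePath.exists_unblocked hyz (le_refl A) p.len p rfl hpok
  intro hsep
  exact hq (hsep q)

end S16


open MixedGraph

namespace S16

variable {V : Type*} {G : MixedGraph V} {y z : V} {Z : Set V}

lemma MPath.ne (p : MPath G y z) : y ≠ z := by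
  intro h
  have := p.inj 0 p.len (by omega) (le_refl _) (by rw [p.first, p.last, h])
  exact absurd this.symm (by have := p.len_pos; omega)

lemma edir_dichotomy (hB : NoBi G) (p : MPath G y z) {i : ℕ} (hi : i < p.len) :
    (p.edir i = .fwd ∧ G.dir (p.vert i) (p.vert (i + 1))) ∨
    (p.edir i = .bwd ∧ G.dir (p.vert (i + 1)) (p.vert i)) := by
  have hv := p.valid i hi
  cases he : p.edir i <;> rw [he] at hv
  · exact Or.inl ⟨rfl, hv⟩
  · exact Or.inr ⟨rfl, hv⟩
  · exact absurd hv (hB _ _)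

lemma headAt2_iff_fwd (hB : NoBi G) (p : MPath G y z) {i : ℕ} (hi : i < p.len) :
    headAt2 (p.edir i) ↔ p.edir i = .fwd := by
  rcases edir_dichotomy hB p hi with ⟨he, _⟩ | ⟨he, _⟩ <;> rw [he] <;>
    simp [headAt2]

lemma headAt1_iff_bwd (hB : NoBi G) (p : MPath G y z) {i : ℕ} (hi : i < p.len) :
    headAt1 (p.edir i) ↔ p.edir i = .bwd := by
  rcases edir_dichotomy hB p hi with ⟨he, _⟩ | ⟨he, _⟩ <;> rw [he] <;>
    simp [headAt1]

section Unblocked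

variable (hB : NoBi G) (p : MPath G y z) (hub : ¬ p.blocked Z)

include p hub in
lemma unblocked_collider_anc :
    ∀ i, 0 < i → i < p.len → p.collider i → p.vert i ∈ ancSet G (Z ∪ {y, z}) := by
  intro i h1 h2 hc
  by_contra hA
  exact hub ⟨i, h1, h2, Or.inl ⟨hc, fun w hw ha => hA ⟨w, hw, ha⟩⟩⟩

include p hub in
lemma unblocked_noncollider_notZ :
    ∀ i, 0 < i → i < p.len → ¬ p.collider i → p.vert i ∉ Z := by
  intro i h1 h2 hc hz
  exact hub ⟨i, h1, h2, Or.inr ⟨hc, hz⟩⟩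

include hB hub in
lemma fwd_mem_ancSet :
    ∀ m k, p.len - k = m → k < p.len → p.edir k = .fwd →
      p.vert k ∈ ancSet G (Z ∪ {y, z}) := by
  intro m
  induction m using Nat.strong_induction_on with
  | _ m ih =>
    intro k hm hk he
    have hd : G.dir (p.vert k) (p.vert (k + 1)) := by
      have := p.valid k hk; rw [he] at this; exact this
    by_cases hlen : k + 1 = p.len
    · refine mem_ancSet_of_anc (anc_single hd) (mem_ancSet_self ?_)
      rw [hlen, p.last]; exact Or.inr (Or.inr rfl)
    · have hk1 : k + 1 < p.len := by omega
      by_cases hc : p.collider (k + 1)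
      · exact mem_ancSet_of_anc (anc_single hd)
          (unblocked_collider_anc p hub (k + 1) (by omega) hk1 hc)
      · have hh2 : headAt2 (p.edir (k + 1 - 1)) := by
          simp only [Nat.add_sub_cancel]
          rw [he]
          exact Or.inl rfl
        have hn1 : ¬ headAt1 (p.edir (k + 1)) := fun hh1 => hc ⟨hh2, hh1⟩
        have he1 : p.edir (k + 1) = .fwd := by
          rcases edir_dichotomy hB p hk1 with ⟨h', _⟩ | ⟨h', _⟩
          · exact h'
          · exact absurd (by rw [h']; exact Or.inl rfl) hn1
        exact mem_ancSet_of_anc (anc_single hd)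
          (ih (p.len - (k + 1)) (by omega) (k + 1) rfl hk1 he1)

include hB hub in
lemma bwd_mem_ancSet :
    ∀ k, k < p.len → p.edir k = .bwd → p.vert (k + 1) ∈ ancSet G (Z ∪ {y, z}) := by
  intro k
  induction k using Nat.strong_induction_on with
  | _ k ih =>
    intro hk he
    have hd : G.dir (p.vert (k + 1)) (p.vert k) := by
      have := p.valid k hk; rw [he] at this; exact this
    rcases Nat.eq_zero_or_pos k with rfl | hk0
    · refine mem_ancSet_of_anc (anc_single hd) (mem_ancSet_self ?_)
      rw [p.first]; exact Or.inr (Or.inl rfl)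
    · by_cases hc : p.collider k
      · exact mem_ancSet_of_anc (anc_single hd)
          (unblocked_collider_anc p hub k hk0 (by omega) hc)
      · have hh1 : headAt1 (p.edir k) := by rw [he]; exact Or.inl rfl
        have hn2 : ¬ headAt2 (p.edir (k - 1)) := fun hh2 => hc ⟨hh2, hh1⟩
        have he1 : p.edir (k - 1) = .bwd := by
          rcases edir_dichotomy hB p (show k - 1 < p.len by omega) with ⟨h', _⟩ | ⟨h', _⟩
          · exact absurd (by rw [h']; exact Or.inl rfl) hn2
          · exact h'
        have := ih (k - 1) (by omega) (by omega) he1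
        rw [show k - 1 + 1 = k by omega] at this
        exact mem_ancSet_of_anc (anc_single hd) this

include hB hub in
lemma noncollider_mem_ancSet :
    ∀ i, 0 < i → i < p.len → ¬ p.collider i → p.vert i ∈ ancSet G (Z ∪ {y, z}) := by
  intro i h1 h2 hc
  by_cases hh2 : headAt2 (p.edir (i - 1))
  · have hn1 : ¬ headAt1 (p.edir i) := fun hh1 => hc ⟨hh2, hh1⟩
    have he : p.edir i = .fwd := by
      rcases edir_dichotomy hB p h2 with ⟨h', _⟩ | ⟨h', _⟩
      · exact h'
      · exact absurd (by rw [h']; exact Or.inl rfl) hn1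
    exact fwd_mem_ancSet hB p hub (p.len - i) i rfl h2 he
  · have he : p.edir (i - 1) = .bwd := by
      rcases edir_dichotomy hB p (show i - 1 < p.len by omega) with ⟨h', _⟩ | ⟨h', _⟩
      · exact absurd (by rw [h']; exact Or.inl rfl) hh2
      · exact h'
    have := bwd_mem_ancSet hB p hub (i - 1) (by omega) he
    rwa [show i - 1 + 1 = i by omega] at this

include hB hub in
lemma buildWalk :
    ∀ m i, p.len - i = m → i < p.len → (i = 0 ∨ ¬ p.collider i) →
      ∃ mid : List V,
        List.Chain' (medge G (ancSet G (Z ∪ {y, z}))) (p.vert i :: mid ++ [z]) ∧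
        ∀ v ∈ mid, ∃ k, 0 < k ∧ k < p.len ∧ v = p.vert k ∧ ¬ p.collider k := by
  intro m
  induction m using Nat.strong_induction_on with
  | _ m ih =>
    intro i hm hi _
    by_cases hlen : i + 1 = p.len
    · refine ⟨[], ?_, by simp⟩
      have hmz : medge G (ancSet G (Z ∪ {y, z})) (p.vert i) z := by
        rcases edir_dichotomy hB p hi with ⟨_, hd⟩ | ⟨_, hd⟩
        · rw [hlen, p.last] at hd; exact Or.inl hd
        · rw [hlen, p.last] at hd; exact Or.inr (Or.inl hd)
      exact List.isChain_pair.mpr hmz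
    · have hi1 : i + 1 < p.len := by omega
      by_cases hc : p.collider (i + 1)
      · -- collider at i+1 : bridge
        have he0 : p.edir i = .fwd := by
          have hh2 : headAt2 (p.edir (i + 1 - 1)) := hc.1
          rcases edir_dichotomy hB p hi with ⟨h', _⟩ | ⟨h', _⟩
          · exact h'
          · exfalso; rw [show i + 1 - 1 = i by omega, h'] at hh2
            rcases hh2 with h | h <;> simp at h
        have he1 : p.edir (i + 1) = .bwd := by
          have hh1 : headAt1 (p.edir (i + 1)) := hc.2
          rcases edir_dichotomy hB p hi1 with ⟨h', _⟩ | ⟨h', _⟩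
          · exfalso; rw [h'] at hh1; rcases hh1 with h | h <;> simp at h
          · exact h'
        have hd0 : G.dir (p.vert i) (p.vert (i + 1)) := by
          have := p.valid i hi; rwa [he0] at this
        have hd1 : G.dir (p.vert (i + 2)) (p.vert (i + 1)) := by
          have := p.valid (i + 1) hi1; rwa [he1] at this
        have hbr : medge G (ancSet G (Z ∪ {y, z})) (p.vert i) (p.vert (i + 2)) :=
          Or.inr (Or.inr ⟨p.vert (i + 1),
            unblocked_collider_anc p hub (i + 1) (by omega) hi1 hc, hd0, hd1⟩)
        by_cases hlen2 : i + 2 = p.len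
        · refine ⟨[], ?_, by simp⟩
          have e2 : p.vert (i + 2) = z := by rw [hlen2, p.last]
          have hd1' : G.dir z (p.vert (i + 1)) :=
            (congrArg (fun t => G.dir t (p.vert (i + 1))) e2).mp hd1
          have hbz : medge G (ancSet G (Z ∪ {y, z})) (p.vert i) z :=
            Or.inr (Or.inr ⟨p.vert (i + 1),
              unblocked_collider_anc p hub (i + 1) (by omega) hi1 hc, hd0, hd1'⟩)
          exact List.isChain_pair.mpr hbz
        · have hi2 : i + 2 < p.len := by omega
          have hnc2 : ¬ p.collider (i + 2) := by
            intro hc2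
            have hh2 : headAt2 (p.edir (i + 2 - 1)) := hc2.1
            rw [show i + 2 - 1 = i + 1 by omega, he1] at hh2
            rcases hh2 with h | h <;> simp at h
          obtain ⟨mid, hchain, hconds⟩ :=
            ih (p.len - (i + 2)) (by omega) (i + 2) rfl hi2 (Or.inr hnc2)
          refine ⟨p.vert (i + 2) :: mid, ?_, ?_⟩
          · exact List.isChain_cons_cons.mpr ⟨hbr, hchain⟩
          · intro v hv
            rcases List.mem_cons.mp hv with rfl | hv'
            · exact ⟨i + 2, by omega, hi2, rfl, hnc2⟩
            · exact hconds v hv'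
      · -- non-collider at i+1
        have hme : medge G (ancSet G (Z ∪ {y, z})) (p.vert i) (p.vert (i + 1)) := by
          rcases edir_dichotomy hB p hi with ⟨_, hd⟩ | ⟨_, hd⟩
          · exact Or.inl hd
          · exact Or.inr (Or.inl hd)
        obtain ⟨mid, hchain, hconds⟩ :=
          ih (p.len - (i + 1)) (by omega) (i + 1) rfl hi1 (Or.inr hc)
        refine ⟨p.vert (i + 1) :: mid, List.isChain_cons_cons.mpr ⟨hme, hchain⟩, ?_⟩
        intro v hv
        rcases List.mem_cons.mp hv with rfl | hv'
        · exact ⟨i + 1, by omega, hi1, rfl, hc⟩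
        · exact hconds v hv'

include hB hub in
lemma MPath.toMorWalk : MorWalk G y z Z := by
  obtain ⟨mid, hchain, hconds⟩ :=
    buildWalk hB p hub p.len 0 (by omega) p.len_pos (Or.inl rfl)
  rw [p.first] at hchain
  refine ⟨mid, hchain, ?_⟩
  intro v hv
  obtain ⟨k, hk0, hklen, rfl, hnc⟩ := hconds v hv
  refine ⟨noncollider_mem_ancSet hB p hub k hk0 hklen hnc,
    unblocked_noncollider_notZ p hub k hk0 hklen hnc, ?_, ?_⟩
  · intro h
    have := p.inj k 0 (by omega) (by omega) (h.trans p.first.symm)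
    omega
  · intro h
    have := p.inj k p.len (by omega) (le_refl _) (h.trans p.last.symm)
    omega

end Unblocked

lemma not_mSep_iff_morWalk (hB : NoBi G) (hyz : y ≠ z) :
    ¬ mSep G y z Z ↔ MorWalk G y z Z := by
  constructor
  · intro h
    have : ∃ p : MPath G y z, ¬ p.blocked Z := by
      by_contra h'
      push_neg at h'
      exact h (fun p => h' p)
    obtain ⟨p, hp⟩ := this
    exact MPath.toMorWalk hB p hp
  · exact fun h => MorWalk.not_mSep hyz h

end S16


open MixedGraph

namespace S16

open scoped Classical

variable {V : Type*} {G : MixedGraph V}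

/-- Single-edge genuine path. -/
def mkSingle {a b : V} (hne : a ≠ b) (e : EdgeDir) (hv : edirValid G a b e)
    (ha : a ∈ G.verts) (hb : b ∈ G.verts) : MPath G a b where
  len := 1
  len_pos := one_pos
  vert := fun k => if k = 0 then a else b
  edir := fun _ => e
  first := by simp
  last := by simp
  mem := by intro i _; by_cases h : i = 0 <;> simp [h, ha, hb]
  inj := by
    intro i j hi hj hij
    by_cases h1 : i = 0 <;> by_cases h2 : j = 0 <;>
      simp [h1, h2] at hij ⊢ <;> first | omega | exact absurd hij hne | exact absurd hij.symm hne
  valid := by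
    intro i hi
    have : i = 0 := by omega
    subst this; simpa using hv

/-- Two-edge collider path `a → c ← b`. -/
def mkBridge {a b c : V} (hab : a ≠ b) (hca : c ≠ a) (hcb : c ≠ b)
    (h1 : G.dir a c) (h2 : G.dir b c) : MPath G a b where
  len := 2
  len_pos := by omega
  vert := fun k => if k = 0 then a else if k = 1 then c else b
  edir := fun k => if k = 0 then .fwd else .bwd
  first := by simp
  last := by simp
  mem := by
    intro i _
    by_cases e0 : i = 0
    · simp [e0, (G.dir_mem h1).1]
    by_cases e1 : i = 1
    · simp [e0, e1, (G.dir_mem h1).2]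
    · simp [e0, e1, (G.dir_mem h2).1]
  inj := by
    intro i j hi hj hij
    have di : i = 0 ∨ i = 1 ∨ i = 2 := by omega
    have dj : j = 0 ∨ j = 1 ∨ j = 2 := by omega
    rcases di with rfl | rfl | rfl <;> rcases dj with rfl | rfl | rfl <;>
      simp at hij ⊢ <;> first
        | rfl
        | exact absurd hij hca.symm | exact absurd hij hab | exact absurd hij hca
        | exact absurd hij hcb | exact absurd hij hab.symm | exact absurd hij hcb.symm
  valid := by
    intro i hi
    by_cases e0 : i = 0
    · subst e0; simpa [edirValid] using h1
    · have : i = 1 := by omega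
      subst this; simpa [edirValid] using h2

lemma mkBridge_collider {a b c : V} (hab : a ≠ b) (hca : c ≠ a) (hcb : c ≠ b)
    (h1 : G.dir a c) (h2 : G.dir b c) :
    (mkBridge hab hca hcb h1 h2).isColliderPath := by
  intro i h0 hl
  have : i = 1 := by
    have : i < 2 := hl
    omega
  subst this
  exact ⟨by simp [mkBridge, headAt2], by simp [mkBridge, headAt1]⟩

/-- Characterization of the Markov boundary in a DAG. -/
lemma mb_iff (hB : NoBi G) (hA : Acyc G) (x b : V) :
    b ∈ G.mb x ↔ b ≠ x ∧ (G.dir b x ∨ G.dir x b ∨ ∃ c, G.dir b c ∧ G.dir x c) := by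
  constructor
  · rintro ⟨hne, p, hcp⟩
    refine ⟨hne, ?_⟩
    rcases Nat.lt_or_ge p.len 2 with hl | hl
    · -- length 1
      have h1 : p.len = 1 := by have := p.len_pos; omega
      rcases edir_dichotomy hB p (show 0 < p.len by omega) with ⟨_, hd⟩ | ⟨_, hd⟩
      · left
        rw [p.first] at hd
        rw [show (0:ℕ)+1 = p.len by omega, p.last] at hd
        exact hd
      · right; left
        rw [p.first] at hd
        rw [show (0:ℕ)+1 = p.len by omega, p.last] at hd
        exact hd
    · rcases Nat.lt_or_ge p.len 3 with hl2 | hl2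
      · -- length 2
        have h2 : p.len = 2 := by omega
        have hc := hcp 1 (by omega) (by omega)
        have he0 : p.edir 0 = .fwd := by
          rcases edir_dichotomy hB p (show 0 < p.len by omega) with ⟨h', _⟩ | ⟨h', _⟩
          · exact h'
          · exfalso; have := hc.1; rw [show (1:ℕ)-1 = 0 from rfl, h'] at this
            rcases this with h | h <;> simp at h
        have he1 : p.edir 1 = .bwd := by
          rcases edir_dichotomy hB p (show 1 < p.len by omega) with ⟨h', _⟩ | ⟨h', _⟩
          · exfalso; have := hc.2; rw [h'] at this
            rcases this with h | h <;> simp at h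
          · exact h'
        have hd0 : G.dir (p.vert 0) (p.vert 1) := by
          have := p.valid 0 (by omega); rwa [he0] at this
        have hd1 : G.dir (p.vert 2) (p.vert 1) := by
          have := p.valid 1 (by omega); rwa [he1] at this
        rw [p.first] at hd0
        rw [show (2:ℕ) = p.len by omega, p.last] at hd1
        exact Or.inr (Or.inr ⟨p.vert 1, hd0, hd1⟩)
      · -- length ≥ 3 : impossible
        exfalso
        have hc1 := hcp 1 (by omega) (by omega)
        have hc2 := hcp 2 (by omega) (by omega)
        have he1b : p.edir 1 = .bwd := by
          rcases edir_dichotomy hB p (show 1 < p.len by omega) with ⟨h', _⟩ | ⟨h', _⟩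
          · exfalso; have := hc1.2; rw [h'] at this
            rcases this with h | h <;> simp at h
          · exact h'
        have := hc2.1
        rw [show (2:ℕ)-1 = 1 from rfl, he1b] at this
        rcases this with h | h <;> simp at h
  · rintro ⟨hne, hd | hd | ⟨c, h1, h2⟩⟩
    · exact ⟨hne, mkSingle hne .fwd (by simpa [edirValid] using hd)
        (G.dir_mem hd).1 (G.dir_mem hd).2, fun i h0 hl => by
          exact absurd (by simpa [mkSingle] using hl) (by omega)⟩
    · exact ⟨hne, mkSingle hne .bwd (by simpa [edirValid] using hd)
        (G.dir_mem hd).2 (G.dir_mem hd).1, fun i h0 hl => by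
          exact absurd (by simpa [mkSingle] using hl) (by omega)⟩
    · have hcb : c ≠ b := (dir_ne hA h1).symm
      have hcx : c ≠ x := (dir_ne hA h2).symm
      exact ⟨hne, mkBridge hne hcb hcx h1 h2, mkBridge_collider hne hcb hcx h1 h2⟩

lemma mb_ne {x b : V} (h : b ∈ G.mb x) : b ≠ x := h.1

lemma mb_mem_verts (hB : NoBi G) (hA : Acyc G) {x b : V} (h : b ∈ G.mb x) :
    b ∈ G.verts := by
  rw [mb_iff hB hA] at h
  rcases h.2 with hd | hd | ⟨c, h1, _⟩
  · exact (G.dir_mem hd).1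
  · exact (G.dir_mem hd).2
  · exact (G.dir_mem h1).1

/-- Height of a vertex: number of strict ancestors. -/
noncomputable def ht [Fintype V] (G : MixedGraph V) (v : V) : ℕ :=
  (Finset.univ.filter (fun u => G.anc u v ∧ u ≠ v)).card

lemma ht_lt [Fintype V] (hA : Acyc G) {a b : V} (h : G.anc a b) (hne : a ≠ b) :
    ht G a < ht G b := by
  apply Finset.card_lt_card
  constructor
  · intro u hu
    simp only [Finset.mem_filter, Finset.mem_univ, true_and] at hu ⊢
    refine ⟨anc_trans hu.1 h, ?_⟩
    rintro rfl
    exact hne (anc_antisymm hA h hu.1)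
  · intro hsub
    have ha : a ∈ Finset.univ.filter (fun u => G.anc u b ∧ u ≠ b) := by
      simp only [Finset.mem_filter, Finset.mem_univ, true_and]
      exact ⟨h, hne⟩
    have := hsub ha
    simp only [Finset.mem_filter, Finset.mem_univ, true_and] at this
    exact this.2 rfl

lemma exists_maxht [Fintype V] {S : Set V} (hS : S.Nonempty) :
    ∃ a ∈ S, ∀ b ∈ S, ht G b ≤ ht G a :=
  Set.exists_max_image S (ht G) (Set.toFinite S) hS

/-- First hit: any ancestor-path from a vertex outside `Mb(x) ∪ {x}` into `Mb(x) ∪ {x}`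
first meets `Mb(x)` at a non-child of `x`. -/
lemma first_hit (hB : NoBi G) (hA : Acyc G) {x v w : V}
    (hvM : v ∉ G.mb x) (hvx : v ≠ x) (hvw : G.anc v w) (hw : w ∈ G.mb x ∨ w = x) :
    ∃ m, m ∈ G.mb x ∧ ¬ G.dir x m ∧ G.anc v m ∧ v ≠ m := by
  obtain ⟨l, hchain, hlast⟩ := List.exists_isChain_cons_of_relationReflTransGen hvw
  clear hvw
  induction l generalizing v with
  | nil =>
    simp only [List.getLast_singleton] at hlast
    subst hlast
    rcases hw with h | h
    · exact absurd h hvM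
    · exact absurd h hvx
  | cons u t ihl =>
    have hstep : G.dir v u := (List.chain_cons.mp hchain).1
    have hchain' : List.Chain G.dir u t := (List.chain_cons.mp hchain).2
    have hlast' : (u :: t).getLast (List.cons_ne_nil _ _) = w := by
      rw [← hlast]; exact (List.getLast_cons _).symm
    by_cases hux : u = x
    · subst hux
      exact absurd ((mb_iff hB hA _ _).mpr ⟨hvx, Or.inl hstep⟩) hvM
    by_cases huM : u ∈ G.mb x
    · by_cases hxu : G.dir x u
      · exact absurd ((mb_iff hB hA _ _).mpr ⟨hvx, Or.inr (Or.inr ⟨u, hstep, hxu⟩)⟩) hvM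
      · exact ⟨u, huM, hxu, anc_single hstep, fun h => hvM (h ▸ huM)⟩
    · obtain ⟨m, hm1, hm2, hm3, _⟩ := ihl huM hux hchain' hlast'
      exact ⟨m, hm1, hm2, anc_trans (anc_single hstep) hm3,
        fun h => hvM (h ▸ hm1)⟩

end S16


open MixedGraph

namespace S16

set_option linter.unusedSectionVars false

open scoped Classical

variable {V : Type*} [Fintype V] {G : MixedGraph V} {x : V}

lemma adj_symm {a b : V} (h : G.adj a b) : G.adj b a := by
  rcases h with h | h | h
  · exact Or.inr (Or.inl h)
  · exact Or.inl h
  · exact Or.inr (Or.inr (G.bi_symm h))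

section Claims

variable (hB : NoBi G) (hA : Acyc G) (hdf : G.DiamondFree)
  (hRHS : ∀ y ∈ G.mb x, ∀ z ∈ G.mb x, y ≠ z →
    ¬ mSep G y z ((G.mb x ∪ {x}) \ {y, z}))

include hB hA in
lemma child_mem_mb {a : V} (ha : G.dir x a) : a ∈ G.mb x :=
  (mb_iff hB hA x a).mpr ⟨(dir_ne hA ha).symm, Or.inr (Or.inl ha)⟩

include hB hA in
lemma parent_mem_mb {a : V} (ha : G.dir a x) : a ∈ G.mb x :=
  (mb_iff hB hA x a).mpr ⟨dir_ne hA ha, Or.inl ha⟩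

include hB hA hdf hRHS in
/-- Exit analysis : from any non-adjacent pair `(a, b)` with `a` a child of `x` and
`b ∈ Mb(x)`, the RHS connection yields either a common child of `a, b, x`, or a
"pure coparent" `q` strictly descended from `a`. -/
lemma exit {a b : V} (ha : G.dir x a) (hb : b ∈ G.mb x) (hab : a ≠ b)
    (hnadj : ¬ G.adj a b) :
    (∃ h, G.dir x h ∧ G.dir a h ∧ G.dir b h) ∨
    (∃ q, q ∈ G.mb x ∧ ¬ G.dir q x ∧ ¬ G.dir x q ∧ G.anc a q ∧ a ≠ q) := by
  have haM : a ∈ G.mb x := child_mem_mb hB hA ha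
  have hax : a ≠ x := (dir_ne hA ha).symm
  have hbx : b ≠ x := mb_ne hb
  set S : Set V := (G.mb x ∪ {x}) \ {a, b} with hS
  have hwalk : MorWalk G a b S :=
    (not_mSep_iff_morWalk hB hab).mp (hRHS a haM b hb hab)
  set A0 : Set V := ancSet G (S ∪ {a, b}) with hA0
  have hxS : x ∈ S := ⟨Or.inr rfl, by
    simp only [Set.mem_insert_iff, Set.mem_singleton_iff]
    push_neg
    exact ⟨fun h => hax h.symm, fun h => hbx h.symm⟩⟩
  -- a vertex of A0 reaches Mb(x) ∪ {x}
  have hA0hit : ∀ v ∈ A0, ∃ w, (w ∈ G.mb x ∨ w = x) ∧ G.anc v w := by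
    intro v hv
    obtain ⟨w, hw, hanc⟩ := hv
    refine ⟨w, ?_, hanc⟩
    rcases hw with ⟨hw1, _⟩ | hw2
    · rcases hw1 with h | h
      · exact Or.inl h
      · exact Or.inr h
    · rcases hw2 with rfl | rfl
      · exact Or.inl haM
      · exact Or.inl hb
  -- main helper: descend to a pure coparent
  have toQ : ∀ v, G.anc a v → v ∉ G.mb x → v ≠ x → v ∈ A0 →
      ∃ q, q ∈ G.mb x ∧ ¬ G.dir q x ∧ ¬ G.dir x q ∧ G.anc a q ∧ a ≠ q := by
    intro v hav hvM hvx hvA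
    obtain ⟨w, hw, hvw⟩ := hA0hit v hvA
    obtain ⟨m, hmM, hmnC, hvm, _⟩ := first_hit hB hA hvM hvx hvw hw
    have ham : G.anc a m := anc_trans hav hvm
    have hmnP : ¬ G.dir m x := fun hd =>
      hA m x hd (anc_trans (anc_single ha) ham)
    refine ⟨m, hmM, hmnP, hmnC, ham, ?_⟩
    rintro rfl
    exact hmnC ha
  -- a pure coparent of Mb(x) yields the conclusion directly
  have fromM : ∀ d, G.dir a d → d ∈ G.mb x → d ≠ x → ¬ G.dir d x → ¬ G.dir x d →
      ∃ q, q ∈ G.mb x ∧ ¬ G.dir q x ∧ ¬ G.dir x q ∧ G.anc a q ∧ a ≠ q := by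
    intro d had hdM _ h1 h2
    exact ⟨d, hdM, h1, h2, anc_single had, dir_ne hA had⟩
  -- analysis of a bridge out of `a`
  have bridgeCase : ∀ d, d ∈ A0 → G.dir a d → (G.dir x d → False) →
      ∃ q, q ∈ G.mb x ∧ ¬ G.dir q x ∧ ¬ G.dir x q ∧ G.anc a q ∧ a ≠ q := by
    intro d hdA had hdC
    have hdx : d ≠ x := fun h => hA a x (h ▸ had) (anc_single ha)
    have hdnP : ¬ G.dir d x := fun hd =>
      hA d x hd (anc_trans (anc_single ha) (anc_single had))
    by_cases hdM : d ∈ G.mb x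
    · exact fromM d had hdM hdx hdnP hdC
    · exact toQ d (anc_single had) hdM hdx hdA
  obtain ⟨mid, hchain, hconds⟩ := hwalk
  cases mid with
  | nil =>
    have hm : medge G A0 a b := List.isChain_pair.mp hchain
    rcases hm with h1 | h1 | ⟨d, hd, h1, h2⟩
    · exact absurd (Or.inl h1) hnadj
    · exact absurd (Or.inr (Or.inl h1)) hnadj
    · by_cases hdC : G.dir x d
      · exact Or.inl ⟨d, hdC, h1, h2⟩
      · exact Or.inr (bridgeCase d hd h1 (fun h => hdC h))
  | cons v1 rest =>
    have hch := List.isChain_cons_cons.mp hchain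
    have hv1 := hconds v1 (List.mem_cons_self)
    have hv1M : v1 ∉ G.mb x := by
      intro hmem
      exact hv1.2.1 ⟨Or.inl hmem, by
        simp only [Set.mem_insert_iff, Set.mem_singleton_iff]
        push_neg
        exact ⟨hv1.2.2.1, hv1.2.2.2⟩⟩
    have hv1x : v1 ≠ x := by
      rintro rfl
      exact hv1.2.1 hxS
    rcases hch.1 with h1 | h1 | ⟨d, hd, h1, h2⟩
    · -- a → v1
      exact Or.inr (toQ v1 (anc_single h1) hv1M hv1x hv1.1)
    · -- v1 → a : impossible, v1 would share child a with x
      exact absurd ((mb_iff hB hA x v1).mpr ⟨hv1x, Or.inr (Or.inr ⟨a, h1, ha⟩)⟩) hv1M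
    · -- bridge a → d ← v1
      by_cases hdC : G.dir x d
      · -- then v1 shares child d with x
        exact absurd ((mb_iff hB hA x v1).mpr ⟨hv1x, Or.inr (Or.inr ⟨d, h2, hdC⟩)⟩) hv1M
      · exact Or.inr (bridgeCase d hd h1 (fun h => hdC h))

include hB hA hdf hRHS in
/-- Claim 1 : any child of `x` is adjacent to any other neighbor of `x`. -/
lemma claim1 : ∀ c m, G.dir x c → (G.dir m x ∨ G.dir x m) → c ≠ m → G.adj c m := by
  by_contra hcon
  push_neg at hcon
  set Bad : Set V := {c | G.dir x c ∧ ∃ m, (G.dir m x ∨ G.dir x m) ∧ c ≠ m ∧ ¬ G.adj c m}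
    with hBad
  have hne : Bad.Nonempty := by
    obtain ⟨c, m, h1, h2, h3, h4⟩ := hcon
    exact ⟨c, h1, m, h2, h3, h4⟩
  obtain ⟨c, hcBad, hcmax⟩ := exists_maxht (G := G) hne
  obtain ⟨hxc, m, hm, hcm, hnadj⟩ := hcBad
  have hmM : m ∈ G.mb x := by
    rcases hm with h | h
    · exact parent_mem_mb hB hA h
    · exact child_mem_mb hB hA h
  have hxm : x ≠ m := by
    rcases hm with h | h
    · exact (dir_ne hA h).symm
    · exact dir_ne hA h
  have hadjxm : G.adj x m := by
    rcases hm with h | h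
    · exact Or.inr (Or.inl h)
    · exact Or.inl h
  rcases exit hB hA hdf hRHS hxc hmM hcm hnadj with ⟨h, hxh, hch, hmh⟩ | hq
  · -- diamond on {x, c, m, h}
    exact hdf ⟨x, c, m, h, (G.dir_mem hxc).1, (G.dir_mem hxc).2, (G.dir_mem hmh).1,
      (G.dir_mem hxh).2,
      dir_ne hA hxc, hxm, dir_ne hA hxh, hcm, dir_ne hA hch, dir_ne hA hmh,
      Or.inl hxc, hadjxm, Or.inl hxh, Or.inl hch, Or.inl hmh, hnadj⟩
  · obtain ⟨q, hqM, hqnP, hqnC, hacq, hacq'⟩ := hq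
    obtain ⟨c3, hqc3, hxc3⟩ : ∃ c3, G.dir q c3 ∧ G.dir x c3 := by
      rcases (mb_iff hB hA x q).mp hqM with ⟨_, h | h | h⟩
      · exact absurd h hqnP
      · exact absurd h hqnC
      · exact h
    have hacc3 : G.anc c c3 := anc_trans hacq (anc_single hqc3)
    have hcc3 : c ≠ c3 := by
      rintro rfl
      exact hA q c hqc3 hacq
    have hht : ht G c < ht G c3 := ht_lt hA hacc3 hcc3
    -- c3 must be adjacent to both c and m, else Bad gets a higher element
    have hadjc3c : G.adj c3 c := by
      by_contra hn
      have : c3 ∈ Bad := ⟨hxc3, c, Or.inr hxc, fun h => hcc3 h.symm, hn⟩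
      exact absurd (hcmax c3 this) (by omega)
    by_cases hc3m : c3 = m
    · exact absurd (adj_symm (hc3m ▸ hadjc3c)) hnadj
    · have hadjc3m : G.adj c3 m := by
        by_contra hn
        have : c3 ∈ Bad := ⟨hxc3, m, hm, hc3m, hn⟩
        exact absurd (hcmax c3 this) (by omega)
      -- diamond on {x, c, m, c3}
      have hmV : m ∈ G.verts := by
        rcases hm with h | h
        · exact (G.dir_mem h).1
        · exact (G.dir_mem h).2
      exact hdf ⟨x, c, m, c3, (G.dir_mem hxc).1, (G.dir_mem hxc).2, hmV, (G.dir_mem hxc3).2,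
        dir_ne hA hxc, hxm, dir_ne hA hxc3, hcm, hcc3, fun h => hc3m h.symm,
        Or.inl hxc, hadjxm, Or.inl hxc3, adj_symm hadjc3c, adj_symm hadjc3m, hnadj⟩

include hB hA hdf hRHS in
/-- Claim 3 : a pure coparent has a unique common child with `x`. -/
lemma claim3 : ∀ q, q ∈ G.mb x → ¬ G.dir q x → ¬ G.dir x q →
    ∀ d d', G.dir q d → G.dir x d → G.dir q d' → G.dir x d' → d = d' := by
  intro q hqM hqnP hqnC d d' hqd hxd hqd' hxd'
  by_contra hne
  have hadj : G.adj d d' := claim1 hB hA hdf hRHS d d' hxd (Or.inr hxd') hne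
  have hnadjxq : ¬ G.adj x q := by
    rintro (h | h | h)
    · exact hqnC h
    · exact hqnP h
    · exact hB _ _ h
  exact hdf ⟨d, x, q, d', (G.dir_mem hxd).2, (G.dir_mem hxd).1, (G.dir_mem hqd).1,
    (G.dir_mem hxd').2,
    (dir_ne hA hxd).symm, (dir_ne hA hqd).symm, hne,
    (mb_ne hqM).symm, (dir_ne hA hxd'), (dir_ne hA hqd'),
    Or.inr (Or.inl hxd), Or.inr (Or.inl hqd), hadj,
    Or.inl hxd', Or.inl hqd', hnadjxq⟩

include hB hA hdf hRHS in
/-- Claim 2 : a child `u` of `x` and a非-adjacent pure coparent `w` share the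
common child of `w` and `x`. -/
lemma claim2 : ∀ u w, G.dir x u → w ∈ G.mb x → ¬ G.dir w x → ¬ G.dir x w →
    ¬ G.adj u w → ∃ d, G.dir w d ∧ G.dir x d ∧ G.dir u d := by
  by_contra hcon
  push_neg at hcon
  set Bad : Set V := {u | G.dir x u ∧ ∃ w, w ∈ G.mb x ∧ ¬ G.dir w x ∧ ¬ G.dir x w ∧
    ¬ G.adj u w ∧ ∀ d, G.dir w d → G.dir x d → ¬ G.dir u d} with hBad
  have hne : Bad.Nonempty := by
    obtain ⟨u, w, h1, h2, h3, h4, h5, h6⟩ := hcon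
    exact ⟨u, h1, w, h2, h3, h4, h5, fun d hd1 hd2 hd3 => h6 d hd1 hd2 hd3⟩
  obtain ⟨u, huBad, humax⟩ := exists_maxht (G := G) hne
  obtain ⟨hxu, w, hwM, hwnP, hwnC, hnadj, hall⟩ := huBad
  obtain ⟨d, hwd, hxd⟩ : ∃ d, G.dir w d ∧ G.dir x d := by
    rcases (mb_iff hB hA x w).mp hwM with ⟨_, h | h | h⟩
    · exact absurd h hwnP
    · exact absurd h hwnC
    · obtain ⟨c, h1, h2⟩ := h
      exact ⟨c, h1, h2⟩
  have hund : ¬ G.dir u d := hall d hwd hxd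
  have hud : u ≠ d := by
    rintro rfl
    exact hnadj (Or.inr (Or.inl hwd))
  have hdu : G.dir d u := by
    rcases claim1 hB hA hdf hRHS d u hxd (Or.inr hxu) (fun h => hud h.symm) with
      h | h | h
    · exact h
    · exact absurd h hund
    · exact absurd h (hB _ _)
  have huw : u ≠ w := by
    rintro rfl
    exact hwnC hxu
  rcases exit hB hA hdf hRHS hxu hwM huw hnadj with ⟨h, hxh, huh, hwh⟩ | hq
  · exact hall h hwh hxh huh
  · obtain ⟨q, hqM, hqnP, hqnC, hauq, hneq⟩ := hq
    obtain ⟨c3, hqc3, hxc3⟩ : ∃ c3, G.dir q c3 ∧ G.dir x c3 := by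
      rcases (mb_iff hB hA x q).mp hqM with ⟨_, h | h | h⟩
      · exact absurd h hqnP
      · exact absurd h hqnC
      · exact h
    have hauc3 : G.anc u c3 := anc_trans hauq (anc_single hqc3)
    have huc3 : u ≠ c3 := by
      rintro rfl
      exact hA q u hqc3 hauq
    have hdiru : G.dir u c3 := by
      rcases claim1 hB hA hdf hRHS c3 u hxc3 (Or.inr hxu) (fun h => huc3 h.symm) with
        h | h | h
      · exact absurd hauc3 (hA c3 u h)
      · exact h
      · exact absurd h (hB _ _)
    by_cases hqw : q = w
    · exact hall c3 (hqw ▸ hqc3) hxc3 hdiru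
    · -- use maximality at c3
      have hc3nBad : c3 ∉ Bad := by
        intro hmem
        exact absurd (humax c3 hmem) (by have := ht_lt hA hauc3 huc3; omega)
      have := hc3nBad
      rw [hBad] at this
      simp only [Set.mem_setOf_eq, not_and, not_exists] at this
      have h2 := this hxc3 w
      -- c3 is adjacent to w, or shares with u a common child of w and x
      rcases Classical.em (G.adj c3 w) with hadj | hnadj3
      · rcases hadj with h | h | h
        · -- c3 → w gives a directed cycle u → c3 → w → d → u
          exact hA d u hdu (anc_trans (anc_single hdiru)
            (anc_trans (anc_single h) (anc_single hwd)))
        · -- w → c3 : then c3 is a common child of w and x, and u → c3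
          exact hall c3 h hxc3 hdiru
        · exact hB _ _ (G.bi_symm h)
      · -- then the ∀-clause must fail for c3
        have h3 : ¬ (∀ d, G.dir w d → G.dir x d → ¬ G.dir c3 d) := by
          intro h4
          exact h2 hwM hwnP hwnC hnadj3 h4
        push_neg at h3
        obtain ⟨d', hwd', hxd', hc3d'⟩ := h3
        have : d' = d := claim3 hB hA hdf hRHS w hwM hwnP hwnC d' d hwd' hxd' hwd hxd
        subst this
        -- directed cycle u → c3 → d' → u
        exact hA d' u hdu (anc_trans (anc_single hdiru) (anc_single hc3d'))

end Claims

end S16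


open MixedGraph

namespace S16

set_option linter.unusedSectionVars false

open scoped Classical

variable {V : Type*} [Fintype V] {G : MixedGraph V} {x : V}

section Reroute

variable (hB : NoBi G) (hA : Acyc G) (hdf : G.DiamondFree)
  (hRHS : ∀ y ∈ G.mb x, ∀ z ∈ G.mb x, y ≠ z →
    ¬ mSep G y z ((G.mb x ∪ {x}) \ {y, z}))

include hB hA hdf hRHS in
/-- Every parent of `x` is a parent of every child of `x`. -/
lemma pa_child_edge {a c : V} (hax : G.dir a x) (hxc : G.dir x c) : G.dir a c := by
  have hac : c ≠ a := by
    rintro rfl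
    exact hA c x hax (anc_single hxc)
  rcases claim1 hB hA hdf hRHS c a hxc (Or.inl hax) hac with h | h | h
  · exact absurd (anc_trans (anc_single hax) (anc_single hxc)) (hA c a h)
  · exact h
  · exact absurd h (hB _ _)

lemma dir_induce_of {a b : V} (h : G.dir a b) (ha : a ≠ x) (hb : b ≠ x) :
    (G.induce (G.verts \ {x})).dir a b :=
  ⟨h, ⟨(G.dir_mem h).1, ha⟩, ⟨(G.dir_mem h).2, hb⟩⟩

include hB hA hdf hRHS in
/-- Ancestor relations among vertices other than `x` survive the removal of `x`. -/
lemma anc_transfer {w : V} (hw : w ≠ x) :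
    ∀ (n : ℕ) (l : List V) (v : V), l.length ≤ n → v ≠ x → List.Chain G.dir v l →
      (v :: l).getLast (List.cons_ne_nil _ _) = w →
      (G.induce (G.verts \ {x})).anc v w := by
  intro n
  induction n using Nat.strong_induction_on with
  | _ n ihn =>
    intro l v hlen hvx hchain hlast
    cases l with
    | nil =>
      simp only [List.getLast_singleton] at hlast
      subst hlast
      exact anc_refl _ _
    | cons u t =>
      have hstep : G.dir v u := (List.chain_cons.mp hchain).1
      have hchain' : List.Chain G.dir u t := (List.chain_cons.mp hchain).2
      have hlast' : (u :: t).getLast (List.cons_ne_nil _ _) = w := by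
        rw [← hlast]; exact (List.getLast_cons _).symm
      by_cases hux : u = x
      · rw [hux] at hstep hchain' hlast'
        cases t with
        | nil =>
          simp only [List.getLast_singleton] at hlast'
          exact absurd hlast' (fun h => hw h.symm)
        | cons u2 t2 =>
          have hstep2 : G.dir x u2 := (List.chain_cons.mp hchain').1
          have hchain2 : List.Chain G.dir u2 t2 := (List.chain_cons.mp hchain').2
          have hlast2 : (u2 :: t2).getLast (List.cons_ne_nil _ _) = w := by
            rw [← hlast']; exact (List.getLast_cons _).symm
          have hu2x : u2 ≠ x := (dir_ne hA hstep2).symm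
          have hvu2 : G.dir v u2 := pa_child_edge hB hA hdf hRHS hstep hstep2
          have := ihn t2.length (by simp [List.length_cons] at hlen; omega) t2 u2
            (le_refl _) hu2x hchain2 hlast2
          exact Relation.ReflTransGen.head (dir_induce_of hvu2 hvx hu2x) this
      · have := ihn t.length (by simp [List.length_cons] at hlen; omega) t u
          (le_refl _) hux hchain' hlast'
        exact Relation.ReflTransGen.head (dir_induce_of hstep hvx hux) this

include hB hA hdf hRHS in
lemma anc_transfer' {v w : V} (hv : v ≠ x) (hw : w ≠ x) (h : G.anc v w) :
    (G.induce (G.verts \ {x})).anc v w := by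
  obtain ⟨l, hchain, hlast⟩ := List.exists_isChain_cons_of_relationReflTransGen h
  exact anc_transfer hB hA hdf hRHS hw l.length l v (le_refl _) hv hchain hlast

variable {y z : V} {Z : Set V} (hyx : y ≠ x) (hzx : z ≠ x) (hZx : x ∉ Z)

include hyx hzx hZx in
lemma mem_notx {w : V} (hw : w ∈ Z ∪ {y, z}) : w ≠ x := by
  rcases hw with h | h | h
  · exact fun he => hZx (he ▸ h)
  · exact fun he => hyx (h ▸ he)
  · exact fun he => hzx (h ▸ he)

include hB hA hdf hRHS hyx hzx hZx in
lemma ancSet_transfer {v : V} (hv : v ≠ x) (h : v ∈ ancSet G (Z ∪ {y, z})) :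
    v ∈ ancSet (G.induce (G.verts \ {x})) (Z ∪ {y, z}) := by
  obtain ⟨w, hw, hanc⟩ := h
  exact ⟨w, hw, anc_transfer' hB hA hdf hRHS hv (mem_notx hyx hzx hZx hw) hanc⟩

include hyx hzx hZx in
lemma cstar_exists (hxA : x ∈ ancSet G (Z ∪ {y, z})) :
    ∃ c, G.dir x c ∧ c ∈ ancSet G (Z ∪ {y, z}) := by
  obtain ⟨w, hw, hanc⟩ := hxA
  have hwx : w ≠ x := mem_notx hyx hzx hZx hw
  rcases Relation.ReflTransGen.cases_head hanc with h | ⟨c, hxc, hcw⟩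
  · exact absurd h.symm hwx
  · exact ⟨c, hxc, w, hw, hcw⟩

include hB hA hdf hRHS hyx hzx hZx in
/-- Transfer of a single moral edge not incident to `x`. -/
lemma medge_transfer {a b : V} (ha : a ≠ x) (hb : b ≠ x)
    (h : medge G (ancSet G (Z ∪ {y, z})) a b) :
    medge (G.induce (G.verts \ {x})) (ancSet (G.induce (G.verts \ {x})) (Z ∪ {y, z})) a b := by
  rcases h with h1 | h1 | ⟨d, hd, h1, h2⟩
  · exact Or.inl (dir_induce_of h1 ha hb)
  · exact Or.inr (Or.inl (dir_induce_of h1 hb ha))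
  · by_cases hdx : d = x
    · rw [hdx] at hd h1 h2
      obtain ⟨c, hxc, hcA⟩ := cstar_exists hyx hzx hZx hd
      have hcx : c ≠ x := (dir_ne hA hxc).symm
      exact Or.inr (Or.inr ⟨c, ancSet_transfer hB hA hdf hRHS hyx hzx hZx hcx hcA,
        dir_induce_of (pa_child_edge hB hA hdf hRHS h1 hxc) ha hcx,
        dir_induce_of (pa_child_edge hB hA hdf hRHS h2 hxc) hb hcx⟩)
    · exact Or.inr (Or.inr ⟨d, ancSet_transfer hB hA hdf hRHS hyx hzx hZx hdx hd,
        dir_induce_of h1 ha hdx, dir_induce_of h2 hb hdx⟩)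

include hB hA hdf hRHS hyx hzx hZx in
/-- The key rerouting step: bypass an interior occurrence of `x`. -/
lemma T1 {u w : V} (hu : u ≠ x) (hw : w ≠ x) (huw : u ≠ w)
    (hxA : x ∈ ancSet G (Z ∪ {y, z}))
    (hmu : medge G (ancSet G (Z ∪ {y, z})) u x)
    (hmw : medge G (ancSet G (Z ∪ {y, z})) x w) :
    medge (G.induce (G.verts \ {x})) (ancSet (G.induce (G.verts \ {x})) (Z ∪ {y, z})) u w := by
  set A0 := ancSet G (Z ∪ {y, z}) with hA0
  -- helper to build bridges in the reduced graph
  have mkbr : ∀ d, d ∈ A0 → G.dir u d → G.dir w d → d ≠ x →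
      medge (G.induce (G.verts \ {x})) (ancSet (G.induce (G.verts \ {x})) (Z ∪ {y, z})) u w := by
    intro d hd h1 h2 hdx
    exact Or.inr (Or.inr ⟨d, ancSet_transfer hB hA hdf hRHS hyx hzx hZx hdx hd,
      dir_induce_of h1 hu hdx, dir_induce_of h2 hw hdx⟩)
  by_cases hadj : G.adj u w
  · rcases hadj with h | h | h
    · exact Or.inl (dir_induce_of h hu hw)
    · exact Or.inr (Or.inl (dir_induce_of h hw hu))
    · exact absurd h (hB _ _)
  -- non-adjacent u, w
  by_cases hxu : G.dir x u
  · -- u is a child of x; all subcases contradict non-adjacency or produce the bridge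
    by_cases hxw : G.dir x w
    · exact absurd (claim1 hB hA hdf hRHS u w hxu (Or.inr hxw) huw) hadj
    by_cases hwx : G.dir w x
    · exact absurd (claim1 hB hA hdf hRHS u w hxu (Or.inl hwx) huw) hadj
    -- w is a pure coparent; get its bridge d2
    have hbr2 : ∃ d2, d2 ∈ A0 ∧ G.dir x d2 ∧ G.dir w d2 := by
      rcases hmw with h1 | h1 | ⟨d, hd, h1, h2⟩
      · exact absurd h1 hxw
      · exact absurd h1 hwx
      · exact ⟨d, hd, h1, h2⟩
    obtain ⟨d2, hd2A, hxd2, hwd2⟩ := hbr2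
    have hwM : w ∈ G.mb x := (mb_iff hB hA x w).mpr ⟨hw, Or.inr (Or.inr ⟨d2, hwd2, hxd2⟩)⟩
    obtain ⟨d, hwd, hxd, hud⟩ := claim2 hB hA hdf hRHS u w hxu hwM hwx hxw hadj
    have hdd2 : d = d2 := claim3 hB hA hdf hRHS w hwM hwx hxw d d2 hwd hxd hwd2 hxd2
    subst hdd2
    exact mkbr d hd2A hud hwd (dir_ne hA hxd).symm
  by_cases hux : G.dir u x
  · -- u is a parent of x
    by_cases hxw : G.dir x w
    · exact absurd (adj_symm (claim1 hB hA hdf hRHS w u hxw (Or.inl hux)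
        (fun h => huw h.symm))) hadj
    by_cases hwx : G.dir w x
    · -- both parents : common child c* from x ∈ A0
      obtain ⟨c, hxc, hcA⟩ := cstar_exists hyx hzx hZx hxA
      exact mkbr c hcA (pa_child_edge hB hA hdf hRHS hux hxc)
        (pa_child_edge hB hA hdf hRHS hwx hxc) (dir_ne hA hxc).symm
    · -- w pure : bridge d2, and u → d2 since u is a parent
      have hbr2 : ∃ d2, d2 ∈ A0 ∧ G.dir x d2 ∧ G.dir w d2 := by
        rcases hmw with h1 | h1 | ⟨d, hd, h1, h2⟩
        · exact absurd h1 hxw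
        · exact absurd h1 hwx
        · exact ⟨d, hd, h1, h2⟩
      obtain ⟨d2, hd2A, hxd2, hwd2⟩ := hbr2
      exact mkbr d2 hd2A (pa_child_edge hB hA hdf hRHS hux hxd2) hwd2
        (dir_ne hA hxd2).symm
  · -- u is a pure coparent with bridge d1
    have hbr1 : ∃ d1, d1 ∈ A0 ∧ G.dir x d1 ∧ G.dir u d1 := by
      rcases hmu with h1 | h1 | ⟨d, hd, h1, h2⟩
      · exact absurd h1 hux
      · exact absurd h1 hxu
      · exact ⟨d, hd, h2, h1⟩
    obtain ⟨d1, hd1A, hxd1, hud1⟩ := hbr1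
    have huM : u ∈ G.mb x := (mb_iff hB hA x u).mpr ⟨hu, Or.inr (Or.inr ⟨d1, hud1, hxd1⟩)⟩
    by_cases hxw : G.dir x w
    · -- w child of x : symmetric to the first case
      obtain ⟨d, hud, hxd, hwd⟩ := claim2 hB hA hdf hRHS w u hxw huM hux hxu
        (fun h => hadj (adj_symm h))
      have hdd1 : d = d1 := claim3 hB hA hdf hRHS u huM hux hxu d d1 hud hxd hud1 hxd1
      subst hdd1
      exact mkbr d hd1A hud1 hwd (dir_ne hA hxd).symm
    by_cases hwx : G.dir w x
    · -- w parent of x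
      exact mkbr d1 hd1A hud1 (pa_child_edge hB hA hdf hRHS hwx hxd1)
        (dir_ne hA hxd1).symm
    · -- both pure coparents
      have hbr2 : ∃ d2, d2 ∈ A0 ∧ G.dir x d2 ∧ G.dir w d2 := by
        rcases hmw with h1 | h1 | ⟨d, hd, h1, h2⟩
        · exact absurd h1 hxw
        · exact absurd h1 hwx
        · exact ⟨d, hd, h1, h2⟩
      obtain ⟨d2, hd2A, hxd2, hwd2⟩ := hbr2
      have hwM : w ∈ G.mb x := (mb_iff hB hA x w).mpr ⟨hw, Or.inr (Or.inr ⟨d2, hwd2, hxd2⟩)⟩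
      by_cases hd12 : d1 = d2
      · subst hd12
        exact mkbr d1 hd1A hud1 hwd2 (dir_ne hA hxd1).symm
      · rcases claim1 hB hA hdf hRHS d1 d2 hxd1 (Or.inr hxd2) hd12 with h12 | h21 | hbi
        · -- d1 → d2 : show u → d2, giving bridge d2
          have hud2 : G.dir u d2 := by
            by_cases hadj2 : G.adj d2 u
            · rcases hadj2 with h | h | h
              · exact absurd (anc_trans (anc_single hud1) (anc_single h12)) (hA d2 u h)
              · exact h
              · exact absurd h (hB _ _)
            · obtain ⟨d, hud, hxd, hd2d⟩ := claim2 hB hA hdf hRHS d2 u hxd2 huM hux hxu hadj2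
              have : d = d1 := claim3 hB hA hdf hRHS u huM hux hxu d d1 hud hxd hud1 hxd1
              subst this
              exact absurd (anc_single h12) (hA d2 d (by exact hd2d))
          exact mkbr d2 hd2A hud2 hwd2 (dir_ne hA hxd2).symm
        · -- d2 → d1 : show w → d1, giving bridge d1
          have hwd1 : G.dir w d1 := by
            by_cases hadj2 : G.adj d1 w
            · rcases hadj2 with h | h | h
              · exact absurd (anc_trans (anc_single hwd2) (anc_single h21)) (hA d1 w h)
              · exact h
              · exact absurd h (hB _ _)
            · obtain ⟨d, hwd, hxd, hd1d⟩ := claim2 hB hA hdf hRHS d1 w hxd1 hwM hwx hxw hadj2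
              have : d = d2 := claim3 hB hA hdf hRHS w hwM hwx hxw d d2 hwd hxd hwd2 hxd2
              subst this
              exact absurd (anc_single h21) (hA d1 d (by exact hd1d))
          exact mkbr d1 hd1A hud1 hwd1 (dir_ne hA hxd1).symm
        · exact absurd hbi (hB _ _)

end Reroute

end S16


open MixedGraph

namespace S16

set_option linter.unusedSectionVars false

open scoped Classical

variable {V : Type*} [Fintype V] {G : MixedGraph V} {x : V}

section Reroute2

variable (hB : NoBi G) (hA : Acyc G) (hdf : G.DiamondFree)
  (hRHS : ∀ y ∈ G.mb x, ∀ z ∈ G.mb x, y ≠ z →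
    ¬ mSep G y z ((G.mb x ∪ {x}) \ {y, z}))
  {y z : V} {Z : Set V} (hyx : y ≠ x) (hzx : z ≠ x) (hZx : x ∉ Z)

include hB hA hdf hRHS hyx hzx hZx in
lemma reroute_aux :
    ∀ (n : ℕ) (mid : List V) (a : V), mid.length ≤ n → a ≠ x → a ≠ z →
    List.Chain' (medge G (ancSet G (Z ∪ {y, z}))) (a :: mid ++ [z]) →
    (∀ v ∈ mid, v ∈ ancSet G (Z ∪ {y, z}) ∧ v ∉ Z ∧ v ≠ y ∧ v ≠ z) →
    ∃ mid', List.Chain' (medge (G.induce (G.verts \ {x}))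
        (ancSet (G.induce (G.verts \ {x})) (Z ∪ {y, z}))) (a :: mid' ++ [z]) ∧
      ∀ v ∈ mid', v ∈ mid ∧ v ≠ x := by
  intro n
  induction n using Nat.strong_induction_on with
  | _ n ihn =>
    intro mid a hlen hax haz hchain hconds
    cases mid with
    | nil =>
      have hm : medge G (ancSet G (Z ∪ {y, z})) a z := List.isChain_pair.mp hchain
      refine ⟨[], ?_, by simp⟩
      exact List.isChain_pair.mpr
        (medge_transfer hB hA hdf hRHS hyx hzx hZx hax hzx hm)
    | cons v rest =>
      have hch := List.isChain_cons_cons.mp hchain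
      have hv := hconds v (List.mem_cons_self)
      by_cases hvx : v = x
      · -- interior occurrence of x
        have hmu : medge G (ancSet G (Z ∪ {y, z})) a x := by rw [← hvx]; exact hch.1
        have hxA : x ∈ ancSet G (Z ∪ {y, z}) := by rw [← hvx]; exact hv.1
        cases rest with
        | nil =>
          have hmz : medge G (ancSet G (Z ∪ {y, z})) x z := by
            rw [← hvx]; exact List.isChain_pair.mp hch.2
          refine ⟨[], ?_, by simp⟩
          exact List.isChain_pair.mpr
            (T1 hB hA hdf hRHS hyx hzx hZx hax hzx haz hxA hmu hmz)
        | cons v2 rest2 =>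
          have hch2 := List.isChain_cons_cons.mp hch.2
          have hmv2 : medge G (ancSet G (Z ∪ {y, z})) x v2 := by
            rw [← hvx]; exact hch2.1
          by_cases hv2x : v2 = x
          · -- consecutive x, x : drop one
            have hch2' : List.Chain' (medge G (ancSet G (Z ∪ {y, z})))
                (v :: rest2 ++ [z]) := by
              rw [hvx, ← hv2x]; exact hch2.2
            have hchain' : List.Chain' (medge G (ancSet G (Z ∪ {y, z})))
                (a :: (v :: rest2) ++ [z]) :=
              List.isChain_cons_cons.mpr ⟨hch.1, hch2'⟩
            obtain ⟨mid', hc', hs'⟩ := ihn (rest2.length + 1)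
              (by simp only [List.length_cons] at hlen; omega) (v :: rest2) a
              (by simp) hax haz hchain'
              (by
                intro u hu
                rcases List.mem_cons.mp hu with rfl | hu'
                · exact hconds u (List.mem_cons_self)
                · exact hconds u (List.mem_cons_of_mem _ (List.mem_cons_of_mem _ hu')))
            refine ⟨mid', hc', ?_⟩
            intro u hu
            obtain ⟨hum, hux⟩ := hs' u hu
            rcases List.mem_cons.mp hum with rfl | hu'
            · exact ⟨List.mem_cons_self, hux⟩
            · exact ⟨List.mem_cons_of_mem _ (List.mem_cons_of_mem _ hu'), hux⟩
          · by_cases hav2 : a = v2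
            · -- the walk returns to a : contract
              have hch2'' : List.Chain' (medge G (ancSet G (Z ∪ {y, z})))
                  (a :: rest2 ++ [z]) := by
                rw [hav2]; exact hch2.2
              obtain ⟨mid', hc', hs'⟩ := ihn rest2.length
                (by simp only [List.length_cons] at hlen; omega) rest2 a
                (le_refl _) hax haz hch2''
                (fun u hu => hconds u
                  (List.mem_cons_of_mem _ (List.mem_cons_of_mem _ hu)))
              refine ⟨mid', hc', ?_⟩
              intro u hu
              obtain ⟨hum, hux⟩ := hs' u hu
              exact ⟨List.mem_cons_of_mem _ (List.mem_cons_of_mem _ hum), hux⟩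
            · -- genuine bypass of x via T1
              have hv2 := hconds v2 (List.mem_cons_of_mem _ (List.mem_cons_self))
              have hmedge' := T1 hB hA hdf hRHS hyx hzx hZx hax hv2x hav2 hxA hmu hmv2
              obtain ⟨mid', hc', hs'⟩ := ihn rest2.length
                (by simp only [List.length_cons] at hlen; omega) rest2 v2
                (le_refl _) hv2x hv2.2.2.2 hch2.2
                (fun u hu => hconds u
                  (List.mem_cons_of_mem _ (List.mem_cons_of_mem _ hu)))
              refine ⟨v2 :: mid', List.isChain_cons_cons.mpr ⟨hmedge', hc'⟩, ?_⟩
              intro u hu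
              rcases List.mem_cons.mp hu with rfl | hu'
              · exact ⟨List.mem_cons_of_mem _ (List.mem_cons_self), hv2x⟩
              · obtain ⟨hum, hux⟩ := hs' u hu'
                exact ⟨List.mem_cons_of_mem _ (List.mem_cons_of_mem _ hum), hux⟩
      · -- ordinary vertex : transfer the moral edge
        have hmedge' := medge_transfer hB hA hdf hRHS hyx hzx hZx hax hvx hch.1
        obtain ⟨mid', hc', hs'⟩ := ihn rest.length
          (by simp only [List.length_cons] at hlen; omega) rest v
          (le_refl _) hvx hv.2.2.2 hch.2
          (fun u hu => hconds u (List.mem_cons_of_mem _ hu))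
        refine ⟨v :: mid', List.isChain_cons_cons.mpr ⟨hmedge', hc'⟩, ?_⟩
        intro u hu
        rcases List.mem_cons.mp hu with rfl | hu'
        · exact ⟨List.mem_cons_self, hvx⟩
        · obtain ⟨hum, hux⟩ := hs' u hu'
          exact ⟨List.mem_cons_of_mem _ hum, hux⟩

include hB hA hdf hRHS hyx hzx hZx in
lemma morWalk_transfer (hyz : y ≠ z) (h : MorWalk G y z Z) :
    MorWalk (G.induce (G.verts \ {x})) y z Z := by
  obtain ⟨mid, hchain, hconds⟩ := h
  obtain ⟨mid', hc', hs'⟩ := reroute_aux hB hA hdf hRHS hyx hzx hZx mid.length mid y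
    (le_refl _) hyx hyz hchain (fun v hv => hconds v hv)
  refine ⟨mid', hc', ?_⟩
  intro v hv
  obtain ⟨hvm, hvx⟩ := hs' v hv
  have hc := hconds v hvm
  exact ⟨ancSet_transfer hB hA hdf hRHS hyx hzx hZx hvx hc.1, hc.2.1, hc.2.2.1, hc.2.2.2⟩

end Reroute2

end S16


open MixedGraph

namespace S16

set_option linter.unusedSectionVars false

open scoped Classical

variable {V : Type*} [Fintype V] {G : MixedGraph V} {x : V}

section Main

variable (hB : NoBi G) (hA : Acyc G) (hdf : G.DiamondFree)

include hB hA hdf in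
theorem removable_of_rhs
    (hRHS : ∀ y ∈ G.mb x, ∀ z ∈ G.mb x, y ≠ z →
      ¬ mSep G y z ((G.mb x ∪ {x}) \ {y, z})) :
    G.Removable x := by
  intro y z hyV hzV hyx hzx hyz Z hZ
  constructor
  · exact fun h => mSep_induce_of_mSep h
  · intro hsep'
    by_contra hns
    have hZx : x ∉ Z := fun hxZ => (hZ hxZ).2 (Or.inl rfl)
    have hwalk : MorWalk G y z Z := (not_mSep_iff_morWalk hB hyz).mp hns
    have hwalk' := morWalk_transfer hB hA hdf hRHS hyx hzx hZx hyz hwalk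
    exact (not_mSep_iff_morWalk (induce_noBi hB) hyz).mpr hwalk' hsep'

include hB hA in
theorem rhs_of_removable (hrem : G.Removable x) :
    ∀ y ∈ G.mb x, ∀ z ∈ G.mb x, y ≠ z →
      ¬ mSep G y z ((G.mb x ∪ {x}) \ {y, z}) := by
  intro y hy z hz hyz
  have hyx : y ≠ x := mb_ne hy
  have hzx : z ≠ x := mb_ne hz
  have hyV : y ∈ G.verts := mb_mem_verts hB hA hy
  have hzV : z ∈ G.verts := mb_mem_verts hB hA hz
  set S : Set V := (G.mb x ∪ {x}) \ {y, z} with hSdef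
  by_cases hadj : G.adj y z
  · -- adjacent vertices are never separated
    have hp : ∃ p : MPath G y z, ¬ p.blocked S := by
      rcases hadj with h | h | h
      · refine ⟨mkSingle hyz .fwd (by simpa [edirValid] using h)
          (G.dir_mem h).1 (G.dir_mem h).2, ?_⟩
        rintro ⟨i, hi0, hil, _⟩
        have : i < 1 := by simpa [mkSingle] using hil
        omega
      · refine ⟨mkSingle hyz .bwd (by simpa [edirValid] using h)
          (G.dir_mem h).2 (G.dir_mem h).1, ?_⟩
        rintro ⟨i, hi0, hil, _⟩
        have : i < 1 := by simpa [mkSingle] using hil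
        omega
      · exact absurd h (hB _ _)
    obtain ⟨p, hp⟩ := hp
    exact fun h => hp (h p)
  · have hxS : x ∈ S := by
      refine ⟨Or.inr rfl, ?_⟩
      simp only [Set.mem_insert_iff, Set.mem_singleton_iff]
      push_neg
      exact ⟨fun h => hyx h.symm, fun h => hzx h.symm⟩
    -- characterize y and z through the Markov boundary
    have hy' := ((mb_iff hB hA x y).mp hy).2
    have hz' := ((mb_iff hB hA x z).mp hz).2
    by_cases hpp : G.dir y x ∧ G.dir z x
    · -- both parents : direct collider walk through x
      have hwalk : MorWalk G y z S := by
        refine ⟨[], ?_, by simp⟩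
        have hm : medge G (ancSet G (S ∪ {y, z})) y z :=
          Or.inr (Or.inr ⟨x, mem_ancSet_self (Or.inl hxS), hpp.1, hpp.2⟩)
        exact List.isChain_pair.mpr hm
      exact MorWalk.not_mSep hyz hwalk
    · -- use removability with the conditioning set Z' = Mb(x) \ {y, z}
      set Z' : Set V := G.mb x \ {y, z} with hZ'def
      -- bridges for the walk y - x - z
      have hymedge : ∃ dy : Option V, medge G (ancSet G (Z' ∪ {y, z})) y x ∧
          (∀ d, dy = some d → G.dir x d ∧ d ∈ Z') ∧
          (dy = none → G.dir y x ∨ G.dir x y) := by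
        rcases hy' with h | h | ⟨c, h1, h2⟩
        · exact ⟨none, Or.inl h, by simp, fun _ => Or.inl h⟩
        · exact ⟨none, Or.inr (Or.inl h), by simp, fun _ => Or.inr h⟩
        · have hcy : c ≠ y := (dir_ne hA h1).symm
          have hcz : c ≠ z := by
            rintro rfl
            exact hadj (Or.inl h1)
          have hcZ' : c ∈ Z' := ⟨child_mem_mb hB hA h2, by
            simp only [Set.mem_insert_iff, Set.mem_singleton_iff]; push_neg;
            exact ⟨hcy, hcz⟩⟩
          exact ⟨some c, Or.inr (Or.inr ⟨c, mem_ancSet_self (Or.inl hcZ'), h1, h2⟩),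
            by rintro d hd; cases hd; exact ⟨h2, hcZ'⟩, by simp⟩
      have hzmedge : ∃ dz : Option V, medge G (ancSet G (Z' ∪ {y, z})) x z ∧
          (∀ d, dz = some d → G.dir x d ∧ d ∈ Z') ∧
          (dz = none → G.dir z x ∨ G.dir x z) := by
        rcases hz' with h | h | ⟨c, h1, h2⟩
        · exact ⟨none, Or.inr (Or.inl h), by simp, fun _ => Or.inl h⟩
        · exact ⟨none, Or.inl h, by simp, fun _ => Or.inr h⟩
        · have hcz : c ≠ z := (dir_ne hA h1).symm
          have hcy : c ≠ y := by
            rintro rfl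
            exact hadj (Or.inr (Or.inl h1))
          have hcZ' : c ∈ Z' := ⟨child_mem_mb hB hA h2, by
            simp only [Set.mem_insert_iff, Set.mem_singleton_iff]; push_neg;
            exact ⟨hcy, hcz⟩⟩
          exact ⟨some c, Or.inr (Or.inr ⟨c, mem_ancSet_self (Or.inl hcZ'), h2, h1⟩),
            by rintro d hd; cases hd; exact ⟨h2, hcZ'⟩, by simp⟩
      obtain ⟨dy, hm1, hdy1, hdy2⟩ := hymedge
      obtain ⟨dz, hm2, hdz1, hdz2⟩ := hzmedge
      -- x is an ancestor of Z' ∪ {y, z}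
      have hxanc : x ∈ ancSet G (Z' ∪ {y, z}) := by
        rcases hdy : dy with _ | d
        · rcases hdy2 hdy with h | h
          · rcases hdz : dz with _ | d'
            · rcases hdz2 hdz with h' | h'
              · exact absurd ⟨h, h'⟩ hpp
              · exact ⟨z, Or.inr (Or.inr rfl), anc_single h'⟩
            · exact ⟨d', Or.inl (hdz1 d' hdz).2, anc_single (hdz1 d' hdz).1⟩
          · exact ⟨y, Or.inr (Or.inl rfl), anc_single h⟩
        · exact ⟨d, Or.inl (hdy1 d hdy).2, anc_single (hdy1 d hdy).1⟩
      have hxZ' : x ∉ Z' := fun h => (mb_ne h.1) rfl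
      have hwalk : MorWalk G y z Z' := by
        refine ⟨[x], ?_, ?_⟩
        · exact List.isChain_cons_cons.mpr ⟨hm1, by exact List.isChain_pair.mpr hm2⟩
        · intro v hv
          rcases List.mem_cons.mp hv with rfl | hv'
          · exact ⟨hxanc, hxZ', fun h => hyx h.symm, fun h => hzx h.symm⟩
          · exact absurd hv' List.not_mem_nil
      have hnosep : ¬ mSep G y z Z' := MorWalk.not_mSep hyz hwalk
      have hZ'sub : Z' ⊆ G.verts \ {x, y, z} := by
        intro v hv
        refine ⟨mb_mem_verts hB hA hv.1, ?_⟩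
        simp only [Set.mem_insert_iff, Set.mem_singleton_iff]
        push_neg
        refine ⟨mb_ne hv.1, ?_, ?_⟩
        · intro h
          exact hv.2 (h ▸ Or.inl rfl)
        · intro h
          exact hv.2 (h ▸ Or.inr rfl)
      have hiff := hrem y z hyV hzV hyx hzx hyz Z' hZ'sub
      have hnosep' : ¬ mSep (G.induce (G.verts \ {x})) y z Z' := fun h => hnosep (hiff.mpr h)
      -- extract an unblocked path in the reduced graph
      have hex : ∃ p : MPath (G.induce (G.verts \ {x})) y z, ¬ p.blocked Z' := by
        by_contra h'
        push_neg at h'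
        exact hnosep' (fun p => h' p)
      obtain ⟨p', hp'⟩ := hex
      -- lift it to G and verify it is unblocked given S
      refine fun hsep => hp' ?_
      have hb := hsep (MPath.lift p')
      obtain ⟨i, hi0, hil, hc⟩ := hb
      refine ⟨i, hi0, hil, ?_⟩
      rcases hc with ⟨hcol, hall⟩ | ⟨hncol, hmem⟩
      · refine Or.inl ⟨hcol, ?_⟩
        intro w hw hanc'
        have hwS : w ∈ S ∪ {y, z} := by
          rcases hw with hw1 | hw2
          · exact Or.inl ⟨Or.inl hw1.1, hw1.2⟩
          · exact Or.inr hw2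
        exact hall w hwS (induce_anc hanc')
      · refine Or.inr ⟨hncol, ?_⟩
        have hix : p'.vert i ≠ x := fun h => (p'.mem i (Nat.le_of_lt hil)).2.2 h
        rcases hmem.1 with h | h
        · exact ⟨h, hmem.2⟩
        · exact absurd h hix

end Main

end S16

/-- In a diamond-free DAG `G`, a vertex `X` is removable iff for all
distinct `Y, Z ∈ Mb(X)`, the set `(Mb(X) ∪ {X}) ∖ {Y, Z}` does not d-separate `Y` and
`Z` in `G`. -/
theorem stmt_16 {V : Type*} [Fintype V] (G : MixedGraph V) (hG : G.IsDAG)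
    (hdf : G.DiamondFree) (x : V) (hx : x ∈ G.verts) :
    G.Removable x ↔
      ∀ y ∈ G.mb x, ∀ z ∈ G.mb x, y ≠ z →
        ¬ mSep G y z ((G.mb x ∪ {x}) \ {y, z}) := by
  have hB := S16.IsDAG.noBi hG
  have hA := S16.IsDAG.acyc hG
  constructor
  · exact S16.rhs_of_removable hB hA
  · exact S16.removable_of_rhs hB hA hdf
end

section
/- In a diamond-free DAG G, let X be a removable vertex and let Y ∈ Mb(X;G). Then Y ∈ CP(X;G) if and only if there exists Z ∈ Mb(X;G)∖{Y} such that Mb(X;G)∖{Y,Z} d-separates X and Y in G. Moreover, such a vertex Z is unique and {Z} = Ch(X;G) ∩ Ch(Y;G). -/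
/-! ### Auxiliary development for Statement 17 -/

namespace Stmt17

open MixedGraph

instance : DecidableEq EdgeDir := fun a b => by
  cases a <;> cases b <;> first
    | exact isTrue rfl
    | exact isFalse (fun h => by cases h)

variable {V : Type*} {H G : MixedGraph V}

/-- Acyclicity of the directed part. -/
def Acyc (H : MixedGraph V) : Prop := ∀ a b, H.dir a b → ¬ H.anc b a

/-- No bidirected edges. -/
def NoBi (H : MixedGraph V) : Prop := ∀ a b, ¬ H.bi a b

lemma isDAG_noBi (hG : G.IsDAG) : NoBi G := hG.2

lemma isDAG_acyc (hG : G.IsDAG) : Acyc G := hG.1.no_dir_cycle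

lemma anc_antisymm (hac : Acyc H) {a b : V} (h1 : H.anc a b) (h2 : H.anc b a) : a = b := by
  rcases Relation.ReflTransGen.cases_head h1 with rfl | ⟨c, hc, hcb⟩
  · rfl
  · exact absurd (hcb.trans h2) (hac _ _ hc)

lemma dir_ne (hac : Acyc H) {a b : V} (h : H.dir a b) : a ≠ b := by
  rintro rfl
  exact hac a a h Relation.ReflTransGen.refl

lemma not_headAt1_fwd : ¬ headAt1 EdgeDir.fwd := by
  rintro (h | h) <;> cases h

lemma not_headAt2_bwd : ¬ headAt2 EdgeDir.bwd := by
  rintro (h | h) <;> cases h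

lemma edir_cases (hnb : NoBi H) {u v : V} (p : MPath H u v) (i : ℕ) (hi : i < p.len) :
    (p.edir i = .fwd ∧ H.dir (p.vert i) (p.vert (i + 1))) ∨
    (p.edir i = .bwd ∧ H.dir (p.vert (i + 1)) (p.vert i)) := by
  have hv := p.valid i hi
  cases h : p.edir i <;> rw [h] at hv
  · exact Or.inl ⟨rfl, hv⟩
  · exact Or.inr ⟨rfl, hv⟩
  · exact absurd hv (hnb _ _)

lemma dirRun {u v : V} (p : MPath H u v) :
    ∀ b a, a ≤ b → b ≤ p.len → (∀ i, a ≤ i → i < b → p.edir i = .fwd) →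
      H.anc (p.vert a) (p.vert b) := by
  intro b
  induction b with
  | zero =>
    intro a ha _ _
    obtain rfl := Nat.le_zero.mp ha
    exact Relation.ReflTransGen.refl
  | succ b ih =>
    intro a ha hb hall
    rcases Nat.eq_or_lt_of_le ha with rfl | h
    · exact Relation.ReflTransGen.refl
    · have hab : a ≤ b := by omega
      have h1 := ih a hab (by omega) (fun i h1 h2 => hall i h1 (by omega))
      have hv := p.valid b (by omega)
      rw [hall b hab (by omega)] at hv
      exact h1.tail hv

lemma bwdRun {u v : V} (p : MPath H u v) :
    ∀ b a, a ≤ b → b ≤ p.len → (∀ i, a ≤ i → i < b → p.edir i = .bwd) →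
      H.anc (p.vert b) (p.vert a) := by
  intro b
  induction b with
  | zero =>
    intro a ha _ _
    obtain rfl := Nat.le_zero.mp ha
    exact Relation.ReflTransGen.refl
  | succ b ih =>
    intro a ha hb hall
    rcases Nat.eq_or_lt_of_le ha with rfl | h
    · exact Relation.ReflTransGen.refl
    · have hab : a ≤ b := by omega
      have h1 := ih a hab (by omega) (fun i h1 h2 => hall i h1 (by omega))
      have hv := p.valid b (by omega)
      rw [hall b hab (by omega)] at hv
      exact Relation.ReflTransGen.head hv h1

/-- Single-edge path. -/
def mk1 (H : MixedGraph V) (a b : V) (e : EdgeDir) (hab : a ≠ b)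
    (ha : a ∈ H.verts) (hb : b ∈ H.verts) (hv : edirValid H a b e) : MPath H a b where
  len := 1
  len_pos := Nat.one_pos
  vert i := if i = 0 then a else b
  edir _ := e
  first := rfl
  last := rfl
  mem i hi := by
    rcases Nat.le_one_iff_eq_zero_or_eq_one.mp hi with rfl | rfl <;> simp [ha, hb]
  inj i j hi hj hij := by
    rcases Nat.le_one_iff_eq_zero_or_eq_one.mp hi with rfl | rfl <;>
      rcases Nat.le_one_iff_eq_zero_or_eq_one.mp hj with rfl | rfl <;> simp_all
  valid i hi := by
    have h0 : i = 0 := by omega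
    subst h0
    simpa using hv

/-- Two-edge path. -/
def mk2 (H : MixedGraph V) (a b c : V) (e0 e1 : EdgeDir)
    (hab : a ≠ b) (hac : a ≠ c) (hbc : b ≠ c)
    (ha : a ∈ H.verts) (hb : b ∈ H.verts) (hc : c ∈ H.verts)
    (h0 : edirValid H a b e0) (h1 : edirValid H b c e1) : MPath H a c where
  len := 2
  len_pos := by norm_num
  vert i := if i = 0 then a else if i = 1 then b else c
  edir i := if i = 0 then e0 else e1
  first := rfl
  last := rfl
  mem i hi := by interval_cases i <;> simp [ha, hb, hc]
  inj i j hi hj hij := by interval_cases i <;> interval_cases j <;> simp_all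
  valid i hi := by
    interval_cases i
    · simpa using h0
    · simpa using h1

/-- Three-edge path. -/
def mk3 (H : MixedGraph V) (a b c d : V) (e0 e1 e2 : EdgeDir)
    (hab : a ≠ b) (hac : a ≠ c) (had : a ≠ d) (hbc : b ≠ c) (hbd : b ≠ d) (hcd : c ≠ d)
    (ha : a ∈ H.verts) (hb : b ∈ H.verts) (hc : c ∈ H.verts) (hd : d ∈ H.verts)
    (h0 : edirValid H a b e0) (h1 : edirValid H b c e1) (h2 : edirValid H c d e2) :
    MPath H a d where
  len := 3
  len_pos := by norm_num
  vert i := if i = 0 then a else if i = 1 then b else if i = 2 then c else d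
  edir i := if i = 0 then e0 else if i = 1 then e1 else e2
  first := rfl
  last := rfl
  mem i hi := by interval_cases i <;> simp [ha, hb, hc, hd]
  inj i j hi hj hij := by interval_cases i <;> interval_cases j <;> simp_all
  valid i hi := by
    interval_cases i
    · simpa using h0
    · simpa using h1
    · simpa using h2

lemma mem_mb_parent (hac : Acyc H) {a b : V} (h : H.dir b a) : b ∈ H.mb a := by
  have hne := dir_ne hac h
  refine ⟨hne, mk1 H b a .fwd hne (H.dir_mem h).1 (H.dir_mem h).2 h, ?_⟩
  intro i hi hlen
  have hlen' : i < 1 := hlen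
  omega

lemma mem_mb_child (hac : Acyc H) {a b : V} (h : H.dir a b) : b ∈ H.mb a := by
  have hne := (dir_ne hac h).symm
  refine ⟨hne, mk1 H b a .bwd hne (H.dir_mem h).2 (H.dir_mem h).1 h, ?_⟩
  intro i hi hlen
  have hlen' : i < 1 := hlen
  omega

lemma mem_mb_copar (hac : Acyc H) {a b c : V} (h1 : H.dir b c) (h2 : H.dir a c)
    (hba : b ≠ a) : b ∈ H.mb a := by
  refine ⟨hba, mk2 H b c a .fwd .bwd (dir_ne hac h1) hba (dir_ne hac h2).symm
    (H.dir_mem h1).1 (H.dir_mem h1).2 (H.dir_mem h2).1 h1 h2, ?_⟩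
  intro i hi hlen
  have hlen' : i < 2 := hlen
  have hi1 : i = 1 := by omega
  subst hi1
  exact ⟨Or.inl rfl, Or.inl rfl⟩

lemma mb_dest (hnb : NoBi H) (hac : Acyc H) {a b : V} (h : b ∈ H.mb a) :
    H.dir b a ∨ H.dir a b ∨ ∃ c, H.dir a c ∧ H.dir b c := by
  obtain ⟨hba, p, hp⟩ := h
  by_cases h1 : p.len = 1
  · have hv1 : p.vert 1 = a := by rw [← h1]; exact p.last
    rcases edir_cases hnb p 0 p.len_pos with ⟨_, hd⟩ | ⟨_, hd⟩
    · left
      have hd' : H.dir (p.vert 0) (p.vert 1) := hd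
      rwa [p.first, hv1] at hd'
    · right; left
      have hd' : H.dir (p.vert 1) (p.vert 0) := hd
      rwa [p.first, hv1] at hd'
  · by_cases h2 : p.len = 2
    · obtain ⟨hh2, hh1⟩ := hp 1 Nat.one_pos (by omega)
      have hh2' : headAt2 (p.edir 0) := hh2
      rcases edir_cases hnb p 0 p.len_pos with ⟨he, hd⟩ | ⟨he, hd⟩
      · rcases edir_cases hnb p 1 (by omega) with ⟨he1, hd1⟩ | ⟨he1, hd1⟩
        · rw [he1] at hh1
          exact absurd hh1 not_headAt1_fwd
        · right; right
          have hv2 : p.vert 2 = a := by rw [← h2]; exact p.last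
          have hda : H.dir (p.vert 2) (p.vert 1) := hd1
          rw [hv2] at hda
          have hdb : H.dir (p.vert 0) (p.vert 1) := hd
          rw [p.first] at hdb
          exact ⟨p.vert 1, hda, hdb⟩
      · rw [he] at hh2'
        exact absurd hh2' not_headAt2_bwd
    · exfalso
      have h3 : 3 ≤ p.len := by have := p.len_pos; omega
      have hc1 := (hp 1 (by omega) (by omega)).2
      have hc2 : headAt2 (p.edir 1) := (hp 2 (by omega) (by omega)).1
      rcases edir_cases hnb p 1 (by omega) with ⟨he, _⟩ | ⟨he, _⟩
      · rw [he] at hc1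
        exact not_headAt1_fwd hc1
      · rw [he] at hc2
        exact not_headAt2_bwd hc2

lemma not_mSep_of_adj (hnb : NoBi H) {a b : V} (ha : a ∈ H.verts) (hb : b ∈ H.verts)
    (hab : a ≠ b) (hadj : H.adj a b) (Z : Set V) : ¬ mSep H a b Z := by
  intro hsep
  rcases hadj with hd | hd | hbi
  · obtain ⟨i, hi0, hik, _⟩ := hsep (mk1 H a b .fwd hab ha hb hd)
    have hik' : i < 1 := hik
    omega
  · obtain ⟨i, hi0, hik, _⟩ := hsep (mk1 H a b .bwd hab ha hb hd)
    have hik' : i < 1 := hik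
    omega
  · exact hnb _ _ hbi

/-- In an acyclic bi-free graph, `Pa(v)` separates non-adjacent `u, v` when
`v` is not an ancestor of `u`. -/
lemma sep_nonadj (hnb : NoBi H) (hac : Acyc H) {u v : V}
    (hnadj : ¬ H.adj u v) (hnanc : ¬ H.anc v u) : mSep H u v (H.parents v) := by
  classical
  intro p
  have hkpos := p.len_pos
  have elen : p.len - 1 + 1 = p.len := by omega
  rcases edir_cases hnb p (p.len - 1) (by omega) with ⟨he, hd⟩ | ⟨he, hd⟩
  · -- last edge points into v
    rw [elen, p.last] at hd
    have hk2 : 2 ≤ p.len := by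
      by_contra hcon
      have h0 : p.len - 1 = 0 := by omega
      rw [h0, p.first] at hd
      exact hnadj (Or.inl hd)
    refine ⟨p.len - 1, by omega, by omega, Or.inr ⟨?_, hd⟩⟩
    rintro ⟨_, hh1⟩
    rw [he] at hh1
    exact not_headAt1_fwd hh1
  · -- last edge points out of v
    rw [elen, p.last] at hd
    have hPlast : ∀ i, p.len - 1 ≤ i → i < p.len → p.edir i = .bwd := by
      intro i hi1 hi2
      have : i = p.len - 1 := by omega
      rw [this, he]
    have hP : ∃ j, ∀ i, j ≤ i → i < p.len → p.edir i = .bwd := ⟨p.len - 1, hPlast⟩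
    have hj := Nat.find_spec hP
    have hjle : Nat.find hP ≤ p.len - 1 := Nat.find_le hPlast
    set j := Nat.find hP with hjdef
    have hancvj : H.anc v (p.vert j) := by
      have := bwdRun p p.len j (by omega) le_rfl hj
      rwa [p.last] at this
    have hj0 : j ≠ 0 := by
      rintro h0
      apply hnanc
      rw [h0, p.first] at hancvj
      exact hancvj
    have hmin := Nat.find_min hP (show j - 1 < j by omega)
    push_neg at hmin
    obtain ⟨i0, hi01, hi02, hi03⟩ := hmin
    have hi0j : i0 = j - 1 := by
      by_contra hne
      exact hi03 (hj i0 (by omega) hi02)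
    have hfwd : p.edir (j - 1) = .fwd := by
      rcases edir_cases hnb p (j - 1) (by omega) with ⟨he2, _⟩ | ⟨he2, _⟩
      · exact he2
      · rw [hi0j] at hi03
        exact absurd he2 hi03
    have hancjv : ¬ H.anc (p.vert j) v := by
      intro hjv
      have hveq : p.vert j = p.vert p.len :=
        (anc_antisymm hac hjv hancvj).trans p.last.symm
      have := p.inj j p.len (by omega) le_rfl hveq
      omega
    refine ⟨j, by omega, by omega, Or.inl ⟨⟨?_, ?_⟩, ?_⟩⟩
    · show headAt2 (p.edir (j - 1))
      rw [hfwd]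
      exact Or.inl rfl
    · show headAt1 (p.edir j)
      rw [hj j le_rfl (by omega)]
      exact Or.inl rfl
    · intro w hw hancjw
      simp only [Set.mem_union, Set.mem_insert_iff, Set.mem_singleton_iff] at hw
      rcases hw with hwZ | rfl | rfl
      · exact hancjv (hancjw.tail hwZ)
      · exact hnanc (hancvj.trans hancjw)
      · exact hancjv hancjw

lemma induce_noBi (hnb : NoBi G) (W : Set V) : NoBi (G.induce W) :=
  fun a b h => hnb a b h.1

lemma induce_anc {W : Set V} {a b : V} (h : (G.induce W).anc a b) : G.anc a b :=
  Relation.ReflTransGen.mono (fun _ _ hh => hh.1) _ _ h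

lemma induce_acyc (hac : Acyc G) (W : Set V) : Acyc (G.induce W) :=
  fun a b h h2 => hac a b h.1 (induce_anc h2)

lemma induce_nadj {W : Set V} {a b : V} (h : ¬ G.adj a b) : ¬ (G.induce W).adj a b := by
  rintro (hh | hh | hh)
  · exact h (Or.inl hh.1)
  · exact h (Or.inr (Or.inl hh.1))
  · exact h (Or.inr (Or.inr hh.1))

lemma not_mSep_fork (hnb : NoBi H) (hac : Acyc H) {a b x : V} (Z : Set V)
    (hd1 : H.dir x a) (hd2 : H.dir x b) (hab : a ≠ b) (hxZ : x ∉ Z) :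
    ¬ mSep H a b Z := by
  intro hsep
  have hxa := dir_ne hac hd1
  have hxb := dir_ne hac hd2
  obtain ⟨i, hi0, hik, hcase⟩ := hsep (mk2 H a x b .bwd .fwd hxa.symm hab hxb
    (H.dir_mem hd1).2 (H.dir_mem hd1).1 (H.dir_mem hd2).2 hd1 hd2)
  have hik' : i < 2 := hik
  have hi1 : i = 1 := by omega
  subst hi1
  rcases hcase with ⟨⟨hh2, _⟩, _⟩ | ⟨_, hmem⟩
  · have hh2' : headAt2 EdgeDir.bwd := hh2
    exact not_headAt2_bwd hh2'
  · exact hxZ hmem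

lemma not_mSep_commonchild (hac : Acyc H) {a b c : V} (Z : Set V)
    (hd1 : H.dir a c) (hd2 : H.dir b c) (hab : a ≠ b) (hcZ : c ∈ Z) :
    ¬ mSep H a b Z := by
  intro hsep
  obtain ⟨i, hi0, hik, hcase⟩ := hsep (mk2 H a c b .fwd .bwd (dir_ne hac hd1) hab
    (dir_ne hac hd2).symm (H.dir_mem hd1).1 (H.dir_mem hd1).2 (H.dir_mem hd2).1 hd1 hd2)
  have hik' : i < 2 := hik
  have hi1 : i = 1 := by omega
  subst hi1
  rcases hcase with ⟨_, hall⟩ | ⟨hncol, _⟩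
  · exact hall c (Set.mem_union_left _ hcZ) Relation.ReflTransGen.refl
  · exact hncol ⟨Or.inl rfl, Or.inl rfl⟩

lemma not_mSep_yzxs (hnb : NoBi H) (hac : Acyc H) {y z x s : V} (Z : Set V)
    (hyz : H.dir y z) (hxz : H.dir x z) (hxs : H.dir x s)
    (hys : y ≠ s) (hzs : z ≠ s) (hyx : y ≠ x)
    (hanczs : H.anc z s) (hxZ : x ∉ Z) : ¬ mSep H y s Z := by
  intro hsep
  obtain ⟨i, hi0, hik, hcase⟩ := hsep (mk3 H y z x s .fwd .bwd .fwd
    (dir_ne hac hyz) hyx hys (dir_ne hac hxz).symm hzs (dir_ne hac hxs)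
    (H.dir_mem hyz).1 (H.dir_mem hyz).2 (H.dir_mem hxz).1 (H.dir_mem hxs).2
    hyz hxz hxs)
  have hik' : i < 3 := hik
  interval_cases i
  · rcases hcase with ⟨_, hall⟩ | ⟨hncol, _⟩
    · exact hall s (Set.mem_union_right _ (by simp)) hanczs
    · exact hncol ⟨Or.inl rfl, Or.inl rfl⟩
  · rcases hcase with ⟨⟨hh2, _⟩, _⟩ | ⟨_, hmem⟩
    · have hh2' : headAt2 EdgeDir.bwd := hh2
      exact not_headAt2_bwd hh2'
    · exact hxZ hmem

/-- Any two common children of a removable vertex `x` and a non-neighbor `y`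
coincide (uses diamond-freeness and removability). First the non-adjacent case,
which only needs both to be children of `x`. -/
lemma unique_cc_aux (hG : G.IsDAG) {x : V} (hrem : G.Removable x)
    {c1 c2 : V} (hd1 : G.dir x c1) (hd2 : G.dir x c2) (hne : c1 ≠ c2)
    (hnadjc : ¬ G.adj c1 c2) (hnanc : ¬ G.anc c2 c1) : False := by
  have hnb : NoBi G := hG.2
  have hac : Acyc G := hG.1.no_dir_cycle
  set G' := G.induce (G.verts \ {x}) with hG'
  have hc1x : c1 ≠ x := (dir_ne hac hd1).symm
  have hc2x : c2 ≠ x := (dir_ne hac hd2).symm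
  have hsep' : mSep G' c1 c2 (G'.parents c2) :=
    sep_nonadj (induce_noBi hnb _) (induce_acyc hac _) (induce_nadj hnadjc)
      (fun h => hnanc (induce_anc h))
  have hZsub : G'.parents c2 ⊆ G.verts \ {x, c1, c2} := by
    intro b hb
    have hbd : G.dir b c2 := hb.1
    refine ⟨(G.dir_mem hbd).1, ?_⟩
    simp only [Set.mem_insert_iff, Set.mem_singleton_iff]
    push_neg
    refine ⟨fun h => hb.2.1.2 h, ?_, dir_ne hac hbd⟩
    rintro rfl
    exact hnadjc (Or.inl hbd)
  have hmsep : mSep G c1 c2 (G'.parents c2) :=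
    (hrem c1 c2 (G.dir_mem hd1).2 (G.dir_mem hd2).2 hc1x hc2x hne _ hZsub).mpr hsep'
  have hxZ : x ∉ G'.parents c2 := fun h => h.2.1.2 rfl
  exact not_mSep_fork hnb hac _ hd1 hd2 hne hxZ hmsep

lemma unique_cc (hG : G.IsDAG) (hdf : G.DiamondFree) {x y : V} (hrem : G.Removable x)
    (hxy : x ≠ y) (hnadj : ¬ G.adj x y) :
    ∀ c1 c2, G.dir x c1 → G.dir y c1 → G.dir x c2 → G.dir y c2 → c1 = c2 := by
  intro c1 c2 h1 h2 h3 h4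
  by_contra hne
  have hac : Acyc G := hG.1.no_dir_cycle
  by_cases hadjc : G.adj c1 c2
  · exact hdf ⟨c1, x, y, c2, (G.dir_mem h1).2, (G.dir_mem h1).1, (G.dir_mem h2).1,
      (G.dir_mem h3).2, (dir_ne hac h1).symm, (dir_ne hac h2).symm, hne, hxy,
      dir_ne hac h3, dir_ne hac h4,
      Or.inr (Or.inl h1), Or.inr (Or.inl h2), hadjc, Or.inl h3, Or.inl h4, hnadj⟩
  · by_cases hanc : G.anc c2 c1
    · have hnanc' : ¬ G.anc c1 c2 := fun h => hne (anc_antisymm hac h hanc)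
      have hnadjc' : ¬ G.adj c2 c1 := by
        rintro (h | h | h)
        · exact hadjc (Or.inr (Or.inl h))
        · exact hadjc (Or.inl h)
        · exact hadjc (Or.inr (Or.inr (G.bi_symm h)))
      exact unique_cc_aux hG hrem h3 h1 (Ne.symm hne) hnadjc' hnanc'
    · exact unique_cc_aux hG hrem h1 h3 hne hadjc hanc

/-- The unique common child `z` of `x` and `y` has no strict descendant among
the children of `x`. -/
lemma no_desc_child (hG : G.IsDAG) (hdf : G.DiamondFree) {x y z : V}
    (hrem : G.Removable x) (hxy : x ≠ y) (hnadj : ¬ G.adj x y)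
    (hxz : G.dir x z) (hyz : G.dir y z)
    {s : V} (hxs : G.dir x s) (hsz : s ≠ z) (hancs : G.anc z s) : False := by
  have hnb : NoBi G := hG.2
  have hac : Acyc G := hG.1.no_dir_cycle
  have hucc := unique_cc hG hdf hrem hxy hnadj
  have hys : y ≠ s := by
    rintro rfl
    exact hnadj (Or.inl hxs)
  have hnancsy : ¬ G.anc s y := fun h => hac y z hyz (hancs.trans h)
  have hnadjys : ¬ G.adj y s := by
    rintro (h | h | h)
    · exact hsz (hucc s z hxs h hxz hyz)
    · exact hnancsy (Relation.ReflTransGen.single h)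
    · exact hnb _ _ h
  set G' := G.induce (G.verts \ {x}) with hG'
  have hsep' : mSep G' y s (G'.parents s) :=
    sep_nonadj (induce_noBi hnb _) (induce_acyc hac _) (induce_nadj hnadjys)
      (fun h => hnancsy (induce_anc h))
  have hZsub : G'.parents s ⊆ G.verts \ {x, y, s} := by
    intro b hb
    have hbd : G.dir b s := hb.1
    refine ⟨(G.dir_mem hbd).1, ?_⟩
    simp only [Set.mem_insert_iff, Set.mem_singleton_iff]
    push_neg
    refine ⟨fun h => hb.2.1.2 h, ?_, dir_ne hac hbd⟩
    rintro rfl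
    exact hnadjys (Or.inl hbd)
  have hmsep : mSep G y s (G'.parents s) :=
    (hrem y s (G.dir_mem hyz).1 (G.dir_mem hxs).2 hxy.symm (dir_ne hac hxs).symm
      hys _ hZsub).mpr hsep'
  have hxZ : x ∉ G'.parents s := fun h => h.2.1.2 rfl
  exact not_mSep_yzxs hnb hac _ hyz hxz hxs hys (Ne.symm hsz) hxy.symm hancs hxZ hmsep

/-- `z` is not an ancestor of anything in `Mb(x) \ {y,z} ∪ {x,y}`. -/
lemma z_no_desc (hG : G.IsDAG) (hdf : G.DiamondFree) {x y z : V}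
    (hrem : G.Removable x) (hxy : x ≠ y) (hnadj : ¬ G.adj x y)
    (hxz : G.dir x z) (hyz : G.dir y z) :
    ∀ w ∈ (G.mb x \ {y, z}) ∪ ({x, y} : Set V), ¬ G.anc z w := by
  have hnb : NoBi G := hG.2
  have hac : Acyc G := hG.1.no_dir_cycle
  intro w hw hanc
  simp only [Set.mem_union, Set.mem_diff, Set.mem_insert_iff, Set.mem_singleton_iff] at hw
  rcases hw with ⟨hmb, hwne⟩ | rfl | rfl
  · push_neg at hwne
    obtain ⟨hwy, hwz⟩ := hwne
    rcases mb_dest hnb hac hmb with hd | hd | ⟨c, hdc, hwc⟩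
    · exact hac x z hxz (hanc.trans (Relation.ReflTransGen.single hd))
    · exact no_desc_child hG hdf hrem hxy hnadj hxz hyz hd hwz hanc
    · have hcz : c ≠ z := by
        rintro rfl
        exact hwz (anc_antisymm hac hanc (Relation.ReflTransGen.single hwc)).symm
      exact no_desc_child hG hdf hrem hxy hnadj hxz hyz hdc hcz (hanc.tail hwc)
  · exact hac _ _ hxz hanc
  · exact hac _ _ hyz hanc

/-- Main separation: `Mb(x) \ {y,z}` m-separates `x` and `y`. -/
lemma main_sep (hG : G.IsDAG) (hdf : G.DiamondFree) {x y z : V}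
    (hrem : G.Removable x) (hxy : x ≠ y) (hnadj : ¬ G.adj x y)
    (hxz : G.dir x z) (hyz : G.dir y z) :
    mSep G x y (G.mb x \ {y, z}) := by
  classical
  have hnb : NoBi G := hG.2
  have hac : Acyc G := hG.1.no_dir_cycle
  have hucc := unique_cc hG hdf hrem hxy hnadj
  have hM3 := z_no_desc hG hdf hrem hxy hnadj hxz hyz
  intro p
  have hkpos := p.len_pos
  have hSmem : ∀ w, w ∈ G.mb x → w ≠ y → w ≠ z → w ∈ G.mb x \ {y, z} := by
    intro w h1 h2 h3
    refine ⟨h1, ?_⟩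
    simp only [Set.mem_insert_iff, Set.mem_singleton_iff]
    push_neg
    exact ⟨h2, h3⟩
  by_cases hk : p.len = 1
  · exfalso
    have hv1 : p.vert 1 = y := by rw [← hk]; exact p.last
    rcases edir_cases hnb p 0 (by omega) with ⟨_, hd⟩ | ⟨_, hd⟩
    · have hd' : G.dir (p.vert 0) (p.vert 1) := hd
      rw [p.first, hv1] at hd'
      exact hnadj (Or.inl hd')
    · have hd' : G.dir (p.vert 1) (p.vert 0) := hd
      rw [p.first, hv1] at hd'
      exact hnadj (Or.inr (Or.inl hd'))
  have hk2 : 2 ≤ p.len := by omega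
  rcases edir_cases hnb p 0 (by omega) with ⟨he0, hd0⟩ | ⟨he0, hd0⟩
  · -- first edge x → v1
    have hd0' : G.dir x (p.vert 1) := by
      have h : G.dir (p.vert 0) (p.vert 1) := hd0
      rwa [p.first] at h
    rcases edir_cases hnb p 1 (by omega) with ⟨he1, hd1⟩ | ⟨he1, hd1⟩
    · -- second edge v1 → v2
      by_cases hz1 : p.vert 1 = z
      · -- v1 = z : find the first collider after the directed run
        have hnall : ∃ i, i < p.len ∧ p.edir i ≠ .fwd := by
          by_contra hcon
          push_neg at hcon
          have hrun := dirRun p p.len 1 (by omega) le_rfl (fun i _ h2 => hcon i h2)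
          rw [p.last, hz1] at hrun
          exact hac y z hyz hrun
        obtain ⟨hjk, hjne⟩ := Nat.find_spec hnall
        set j := Nat.find hnall with hjdef
        have hjmin : ∀ i, i < j → p.edir i = .fwd := by
          intro i hi
          by_contra hcon
          exact Nat.find_min hnall hi ⟨by omega, hcon⟩
        have hj2 : 2 ≤ j := by
          by_contra hcon
          interval_cases j
          · exact hjne he0
          · exact hjne he1
        have hfwd : p.edir (j - 1) = .fwd := hjmin _ (by omega)
        have hbwd : p.edir j = .bwd := by
          rcases edir_cases hnb p j hjk with ⟨h, _⟩ | ⟨h, _⟩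
          · exact absurd h hjne
          · exact h
        have hzj : G.anc z (p.vert j) := by
          have := dirRun p j 1 (by omega) (by omega) (fun i h1 h2 => hjmin i h2)
          rwa [hz1] at this
        refine ⟨j, by omega, hjk, Or.inl ⟨⟨?_, ?_⟩, ?_⟩⟩
        · show headAt2 (p.edir (j - 1))
          rw [hfwd]
          exact Or.inl rfl
        · show headAt1 (p.edir j)
          rw [hbwd]
          exact Or.inl rfl
        · intro w hw hancw
          exact hM3 w hw (hzj.trans hancw)
      · -- v1 ≠ z : v1 is a non-collider in S
        refine ⟨1, Nat.one_pos, by omega, Or.inr ⟨?_, ?_⟩⟩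
        · rintro ⟨_, hh1⟩
          rw [he1] at hh1
          exact not_headAt1_fwd hh1
        · refine hSmem _ (mem_mb_child hac hd0') ?_ hz1
          intro h
          have := p.inj 1 p.len (by omega) le_rfl (by rw [h, p.last])
          omega
    · -- second edge v1 ← v2
      have hd1' : G.dir (p.vert 2) (p.vert 1) := hd1
      by_cases hz1 : p.vert 1 = z
      · -- v1 = z is a collider, blocked by Fact Z
        refine ⟨1, Nat.one_pos, by omega, Or.inl ⟨⟨?_, ?_⟩, ?_⟩⟩
        · show headAt2 (p.edir 0)
          rw [he0]
          exact Or.inl rfl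
        · show headAt1 (p.edir 1)
          rw [he1]
          exact Or.inl rfl
        · intro w hw hancw
          rw [hz1] at hancw
          exact hM3 w hw hancw
      · -- v1 ≠ z : then v2 is a non-collider in S
        have hk3 : 3 ≤ p.len := by
          by_contra hcon
          have hl2 : p.len = 2 := by omega
          have hv2 : p.vert 2 = y := by rw [← hl2]; exact p.last
          rw [hv2] at hd1'
          exact hz1 (hucc (p.vert 1) z hd0' hd1' hxz hyz)
        refine ⟨2, by omega, by omega, Or.inr ⟨?_, ?_⟩⟩
        · rintro ⟨hh2, _⟩
          have hh2' : headAt2 (p.edir 1) := hh2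
          rw [he1] at hh2'
          exact not_headAt2_bwd hh2'
        · have h2x : p.vert 2 ≠ x := by
            intro h
            have := p.inj 2 0 (by omega) (by omega) (by rw [h, p.first])
            omega
          refine hSmem _ (mem_mb_copar hac hd1' hd0' h2x) ?_ ?_
          · intro h
            have := p.inj 2 p.len (by omega) le_rfl (by rw [h, p.last])
            omega
          · intro h
            rw [h] at hd1'
            exact absurd (Relation.ReflTransGen.single hd1')
              (fun hh => no_desc_child hG hdf hrem hxy hnadj hxz hyz hd0' hz1 hh)
  · -- first edge x ← v1 : v1 is a parent of x, non-collider in S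
    have hd0' : G.dir (p.vert 1) x := by
      have h : G.dir (p.vert 1) (p.vert 0) := hd0
      rwa [p.first] at h
    refine ⟨1, Nat.one_pos, by omega, Or.inr ⟨?_, ?_⟩⟩
    · rintro ⟨hh2, _⟩
      have hh2' : headAt2 (p.edir 0) := hh2
      rw [he0] at hh2'
      exact not_headAt2_bwd hh2'
    · refine hSmem _ (mem_mb_parent hac hd0') ?_ ?_
      · intro h
        have := p.inj 1 p.len (by omega) le_rfl (by rw [h, p.last])
        omega
      · intro h
        rw [h] at hd0'
        exact hac x z hxz (Relation.ReflTransGen.single hd0')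

end Stmt17

/-- In a diamond-free DAG `G`, if `X` is removable and `Y ∈ Mb(X)`,
then `Y ∈ CP(X)` iff there exists `Z ∈ Mb(X) ∖ {Y}` such that `Mb(X) ∖ {Y, Z}`
d-separates `X` and `Y`; moreover such a `Z` is unique and
`{Z} = Ch(X) ∩ Ch(Y)`. -/
theorem stmt_17 {V : Type*} [Fintype V] (G : MixedGraph V) (hG : G.IsDAG)
    (hdf : G.DiamondFree) (x : V) (hx : x ∈ G.verts) (hrem : G.Removable x)
    (y : V) (hy : y ∈ G.mb x) :
    (y ∈ G.coparents x ↔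
      ∃ z ∈ G.mb x \ {y}, mSep G x y (G.mb x \ {y, z})) ∧
    (∀ z ∈ G.mb x \ {y}, mSep G x y (G.mb x \ {y, z}) →
      ({z} : Set V) = G.children x ∩ G.children y) := by
  have hnb : Stmt17.NoBi G := hG.2
  have hac : Stmt17.Acyc G := hG.1.no_dir_cycle
  obtain ⟨hyx, py, hpy⟩ := hy
  have hyv : y ∈ G.verts := by
    have := py.mem 0 (by omega)
    rwa [py.first] at this
  have hxyne : x ≠ y := hyx.symm
  have hex : ¬ G.adj x y → ∃ c, G.dir x c ∧ G.dir y c := by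
    intro hnadj
    rcases Stmt17.mb_dest hnb hac ⟨hyx, py, hpy⟩ with hd | hd | ⟨c, h1, h2⟩
    · exact absurd (Or.inr (Or.inl hd)) hnadj
    · exact absurd (Or.inl hd) hnadj
    · exact ⟨c, h1, h2⟩
  constructor
  · constructor
    · rintro ⟨_, hnadj, c, hxc, hyc⟩
      refine ⟨c, ⟨Stmt17.mem_mb_child hac hxc, ?_⟩,
        Stmt17.main_sep hG hdf hrem hxyne hnadj hxc hyc⟩
      intro h
      exact Stmt17.dir_ne hac hyc (Set.mem_singleton_iff.mp h).symm
    · rintro ⟨z, ⟨hzmb, hzy⟩, hsep⟩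
      have hnadj : ¬ G.adj x y := fun h =>
        Stmt17.not_mSep_of_adj hnb hx hyv hxyne h _ hsep
      obtain ⟨c, h1, h2⟩ := hex hnadj
      exact ⟨hyx, hnadj, c, h1, h2⟩
  · intro z hzmem hsep
    have hnadj : ¬ G.adj x y := fun h =>
      Stmt17.not_mSep_of_adj hnb hx hyv hxyne h _ hsep
    have hCC : ∀ c, G.dir x c → G.dir y c → c = z := by
      intro c h1 h2
      by_contra hcz
      have hcS : c ∈ G.mb x \ {y, z} := by
        refine ⟨Stmt17.mem_mb_child hac h1, ?_⟩
        simp only [Set.mem_insert_iff, Set.mem_singleton_iff]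
        push_neg
        exact ⟨(Stmt17.dir_ne hac h2).symm, hcz⟩
      exact Stmt17.not_mSep_commonchild hac _ h1 h2 hxyne hcS hsep
    obtain ⟨c0, hc1, hc2⟩ := hex hnadj
    have hc0z := hCC c0 hc1 hc2
    ext w
    simp only [Set.mem_singleton_iff, Set.mem_inter_iff]
    constructor
    · rintro rfl
      exact ⟨hc0z ▸ hc1, hc0z ▸ hc2⟩
    · rintro ⟨h1, h2⟩
      exact hCC w h1 h2
end
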